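/- arXiv:2304.14345 — 5 statements merged into one kernel-verified Lean document; each statement's English description precedes it below -/
import Mathlib

section
/- If A and B are positive semidefinite symmetric real matrices with the same kernel, then A ⪰ B (i.e., A - B is positive semidefinite) if and only if B⁺ ⪰ A⁺, where M⁺ denotes the Moore–Penrose pseudoinverse. -/
open Matrix

/-- The four Penrose conditions characterizing the Moore–Penrose pseudoinverse. -/
def IsMoorePenrose {n : Type*} [Fintype n] (A Ap : Matrix n n ℝ) : Prop :=
  A * Ap * A = A ∧ Ap * A * Ap = Ap ∧ (A * Ap)ᵀ = A * Ap ∧ (Ap * A)ᵀ = Ap * A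

section Aux
variable {n : Type*} [Fintype n] [DecidableEq n]

lemma mp_rconj (M : Matrix n n ℝ) : Mᴴ = Mᵀ := by
  ext i j; simp [conjTranspose_apply]

lemma mp_ext_of_mulVec {P Q : Matrix n n ℝ} (h : ∀ x, P *ᵥ x = Q *ᵥ x) : P = Q := by
  ext i j
  have := congrFun (h (Pi.single j 1)) i
  simpa using this

lemma mp_unique {A X Y : Matrix n n ℝ} (hX : IsMoorePenrose A X) (hY : IsMoorePenrose A Y) :
    X = Y := by
  obtain ⟨hX1, hX2, hX3, hX4⟩ := hX
  obtain ⟨hY1, hY2, hY3, hY4⟩ := hY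
  have hAtY : Aᵀ = Aᵀ * Yᵀ * Aᵀ := by
    conv_lhs => rw [← hY1]
    rw [transpose_mul, transpose_mul, ← mul_assoc]
  have hAX : A * X = A * Y := by
    calc A * X = Xᵀ * Aᵀ := by rw [← transpose_mul, hX3]
    _ = Xᵀ * (Aᵀ * Yᵀ * Aᵀ) := by rw [← hAtY]
    _ = (Xᵀ * Aᵀ) * (Yᵀ * Aᵀ) := by noncomm_ring
    _ = (A * X)ᵀ * (A * Y)ᵀ := by rw [← transpose_mul, ← transpose_mul]
    _ = (A * X) * (A * Y) := by rw [hX3, hY3]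
    _ = (A * X * A) * Y := by noncomm_ring
    _ = A * Y := by rw [hX1]
  have hXA : X * A = Y * A := by
    calc X * A = Aᵀ * Xᵀ := by rw [← transpose_mul, hX4]
    _ = (Aᵀ * Yᵀ * Aᵀ) * Xᵀ := by rw [← hAtY]
    _ = (Aᵀ * Yᵀ) * (Aᵀ * Xᵀ) := by noncomm_ring
    _ = (Y * A)ᵀ * (X * A)ᵀ := by rw [← transpose_mul, ← transpose_mul]
    _ = (Y * A) * (X * A) := by rw [hX4, hY4]
    _ = Y * (A * X * A) := by noncomm_ring
    _ = Y * A := by rw [hX1]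
  calc X = X * A * X := hX2.symm
  _ = X * (A * Y) := by rw [mul_assoc, hAX]
  _ = (X * A) * Y := by rw [mul_assoc]
  _ = (Y * A) * Y := by rw [hXA]
  _ = Y := hY2

lemma mp_symm {A Ap : Matrix n n ℝ} (hs : Aᵀ = A) (h : IsMoorePenrose A Ap) : Apᵀ = Ap := by
  obtain ⟨h1, h2, h3, h4⟩ := h
  refine mp_unique (A := A) ?_ ⟨h1, h2, h3, h4⟩
  refine ⟨?_, ?_, ?_, ?_⟩
  · have e1 : A * Apᵀ * A = (A * Ap * A)ᵀ := by
      rw [transpose_mul, transpose_mul, hs]; noncomm_ring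
    rw [e1, h1, hs]
  · have e1 : Apᵀ * A * Apᵀ = (Ap * A * Ap)ᵀ := by
      rw [transpose_mul, transpose_mul, hs]; noncomm_ring
    rw [e1, h2]
  · have key : A * Apᵀ = Ap * A := by
      calc A * Apᵀ = Aᵀᵀ * Apᵀ := by rw [transpose_transpose]
      _ = (Ap * Aᵀ)ᵀ := by rw [transpose_mul]
      _ = (Ap * A)ᵀ := by rw [hs]
      _ = Ap * A := h4
    rw [key, h4, ← key]
  · have key : Apᵀ * A = A * Ap := by
      calc Apᵀ * A = Apᵀ * Aᵀᵀ := by rw [transpose_transpose]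
      _ = (Aᵀ * Ap)ᵀ := by rw [transpose_mul]
      _ = (A * Ap)ᵀ := by rw [hs]
      _ = A * Ap := h3
    rw [key, h3, ← key]

lemma mp_comm {A Ap : Matrix n n ℝ} (hs : Aᵀ = A) (h : IsMoorePenrose A Ap) :
    A * Ap = Ap * A := by
  have hps := mp_symm hs h
  calc A * Ap = (A * Ap)ᵀ := h.2.2.1.symm
  _ = Apᵀ * Aᵀ := by rw [transpose_mul]
  _ = Ap * A := by rw [hps, hs]

lemma mp_proj_eq {A B Ap Bp : Matrix n n ℝ}
    (hker : ∀ x : n → ℝ, A.mulVec x = 0 ↔ B.mulVec x = 0)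
    (hAp : IsMoorePenrose A Ap) (hBp : IsMoorePenrose B Bp) :
    Ap * A = Bp * B := by
  have kerP : ∀ (M Mp : Matrix n n ℝ), IsMoorePenrose M Mp →
      ∀ x, ((Mp * M) *ᵥ x = 0 ↔ M *ᵥ x = 0) := by
    intro M Mp hM x
    constructor
    · intro h
      have h2 : M *ᵥ x = (M * (Mp * M)) *ᵥ x := by rw [← mul_assoc, hM.1]
      rw [h2, ← mulVec_mulVec, h, mulVec_zero]
    · intro h
      rw [← mulVec_mulVec, h, mulVec_zero]
  have idem : ∀ (M Mp : Matrix n n ℝ), IsMoorePenrose M Mp →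
      (Mp * M) * (Mp * M) = Mp * M := by
    intro M Mp hM
    calc (Mp * M) * (Mp * M) = (Mp * M * Mp) * M := by noncomm_ring
    _ = Mp * M := by rw [hM.2.1]
  have step : ∀ (M Mp N Np : Matrix n n ℝ), IsMoorePenrose M Mp → IsMoorePenrose N Np →
      (∀ x : n → ℝ, M.mulVec x = 0 ↔ N.mulVec x = 0) →
      Mp * M = (Mp * M) * (Np * N) := by
    intro M Mp N Np hM hN hk
    apply mp_ext_of_mulVec
    intro x
    have hz : (Mp * M) *ᵥ (x - (Np * N) *ᵥ x) = 0 := by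
      rw [kerP M Mp hM, hk, ← kerP N Np hN]
      rw [mulVec_sub, mulVec_mulVec, idem N Np hN, sub_self]
    rw [mulVec_sub] at hz
    have h3 := sub_eq_zero.mp hz
    rw [h3, mulVec_mulVec]
  have h1 := step A Ap B Bp hAp hBp hker
  have h2 := step B Bp A Ap hBp hAp (fun x => (hker x).symm)
  calc Ap * A = (Ap * A)ᵀ := (hAp.2.2.2).symm
  _ = ((Ap * A) * (Bp * B))ᵀ := by rw [← h1]
  _ = (Bp * B)ᵀ * (Ap * A)ᵀ := by rw [transpose_mul]
  _ = (Bp * B) * (Ap * A) := by rw [hAp.2.2.2, hBp.2.2.2]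
  _ = Bp * B := h2.symm

lemma mp_ker {A Ap : Matrix n n ℝ} (hs : Aᵀ = A) (h : IsMoorePenrose A Ap) :
    ∀ x, Ap *ᵥ x = 0 ↔ A *ᵥ x = 0 := by
  have hc := mp_comm hs h
  intro x
  constructor
  · intro hx
    have e : A = (A * A) * Ap := by
      calc A = A * Ap * A := h.1.symm
      _ = A * (A * Ap) := by rw [mul_assoc, ← hc]
      _ = (A * A) * Ap := by rw [mul_assoc]
    rw [e, ← mulVec_mulVec, hx, mulVec_zero]
  · intro hx
    have e : Ap = (Ap * Ap) * A := by
      calc Ap = Ap * A * Ap := h.2.1.symm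
      _ = Ap * (Ap * A) := by rw [mul_assoc, hc]
      _ = (Ap * Ap) * A := by rw [mul_assoc]
    rw [e, ← mulVec_mulVec, hx, mulVec_zero]

lemma mp_psd {A Ap : Matrix n n ℝ} (hA : A.PosSemidef) (h : IsMoorePenrose A Ap) :
    Ap.PosSemidef := by
  have hs : Aᵀ = A := by rw [← mp_rconj]; exact hA.1
  have hps := mp_symm hs h
  have h2 := hA.mul_mul_conjTranspose_same Ap
  rw [mp_rconj, hps, h.2.1] at h2
  exact h2

lemma mp_forward {A B Ap Bp : Matrix n n ℝ}
    (hA : A.PosSemidef) (hB : B.PosSemidef)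
    (hker : ∀ x : n → ℝ, A.mulVec x = 0 ↔ B.mulVec x = 0)
    (hAp : IsMoorePenrose A Ap) (hBp : IsMoorePenrose B Bp)
    (h : (A - B).PosSemidef) : (Bp - Ap).PosSemidef := by
  have hsA : Aᵀ = A := by rw [← mp_rconj]; exact hA.1
  have hsB : Bᵀ = B := by rw [← mp_rconj]; exact hB.1
  have hsAp := mp_symm hsA hAp
  have hsBp := mp_symm hsB hBp
  have hcA := mp_comm hsA hAp
  have hcB := mp_comm hsB hBp
  have hP : Ap * A = Bp * B := mp_proj_eq hker hAp hBp
  have e4 : Ap * B * Bp = Ap := by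
    calc Ap * B * Bp = Ap * (B * Bp) := by rw [mul_assoc]
    _ = Ap * (Bp * B) := by rw [hcB]
    _ = Ap * (A * Ap) := by rw [← hP, ← hcA]
    _ = Ap * A * Ap := by rw [mul_assoc]
    _ = Ap := hAp.2.1
  have e5 : Bp * B * Ap = Ap := by rw [← hP, hAp.2.1]
  have key : Bp - Ap = Ap * (A - B) * Ap + (Ap - Bp) * B * (Ap - Bp) := by
    have expand : Ap * (A - B) * Ap + (Ap - Bp) * B * (Ap - Bp)
        = (Ap * A * Ap) - Ap * B * Ap
          + (Ap * B * Ap - Ap * B * Bp - (Bp * B * Ap - Bp * B * Bp)) := by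
      noncomm_ring
    rw [expand, hAp.2.1, hBp.2.1, e4, e5]
    abel
  have p1 := h.mul_mul_conjTranspose_same Ap
  have p2 := hB.mul_mul_conjTranspose_same (Ap - Bp)
  rw [mp_rconj, hsAp] at p1
  rw [mp_rconj, transpose_sub, hsAp, hsBp] at p2
  rw [key]
  exact p1.add p2

end Aux

theorem stmt0 {n : Type*} [Fintype n] [DecidableEq n]
    (A B Ap Bp : Matrix n n ℝ)
    (hA : A.PosSemidef) (hB : B.PosSemidef)
    (hker : ∀ x : n → ℝ, A.mulVec x = 0 ↔ B.mulVec x = 0)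
    (hAp : IsMoorePenrose A Ap) (hBp : IsMoorePenrose B Bp) :
    (A - B).PosSemidef ↔ (Bp - Ap).PosSemidef := by
  constructor
  · exact mp_forward hA hB hker hAp hBp
  · intro h
    have hApPSD := mp_psd hA hAp
    have hBpPSD := mp_psd hB hBp
    have hsA : Aᵀ = A := by rw [← mp_rconj]; exact hA.1
    have hsB : Bᵀ = B := by rw [← mp_rconj]; exact hB.1
    have hker' : ∀ x : n → ℝ, Bp.mulVec x = 0 ↔ Ap.mulVec x = 0 := by
      intro x
      rw [mp_ker hsB hBp x, mp_ker hsA hAp x, hker x]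
    exact mp_forward hBpPSD hApPSD hker'
      ⟨hBp.2.1, hBp.1, hBp.2.2.2, hBp.2.2.1⟩
      ⟨hAp.2.1, hAp.1, hAp.2.2.2, hAp.2.2.1⟩ h
end

section
/- If G is the Laplacian of a connected weighted graph and C ⊂ V is a proper nonempty subset of vertices, then the Schur complement Sc(L_G, C) = L_{CC} - L_{CF} L_{FF}^{-1} L_{FC} (with F = V \ C) is itself the Laplacian matrix of a connected weighted graph on vertex set C. -/
/-!
The block `L_FF` of the Laplacian is positive definite: its quadratic form is that of `L`
on vectors vanishing on `C`, which is a sum of `w u v (y u - y v)²` and vanishes only on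
vectors constant along the edges of the connected graph, hence only at `0`. A positive
definite matrix with nonpositive off-diagonal entries has an entrywise nonnegative inverse,
so the off-diagonal entries `L_cd - Σ L_cu (L_FF⁻¹)_uv L_vd` of the Schur complement `S` are
nonpositive; its rows sum to zero because `L 1 = 0`; so it is the Laplacian of nonnegative
weights. If the graph of these weights were disconnected, the indicator `z` of a component
would have `zᵀ S z = 0`; extending `z` harmonically by `x = -L_FF⁻¹ L_FC z` gives
`(x, z)ᵀ L (x, z) = zᵀ S z = 0`, so `(x, z)` is constant on the connected original graph,
contradicting the choice of `z`.
-/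

open Matrix BigOperators

/-- Laplacian of a weighted graph given by a symmetric weight function with zero diagonal. -/
def lap {V : Type*} [Fintype V] [DecidableEq V] (w : V → V → ℝ) : Matrix V V ℝ :=
  fun u v => if u = v then ∑ x, w u x else - w u v

theorem SimpleGraph.Reachable.apply_eq_of_adj {V α : Type*} {G : SimpleGraph V} {f : V → α}
    (hf : ∀ u v, G.Adj u v → f u = f v) {a b : V} (hab : G.Reachable a b) : f a = f b := by
  obtain ⟨p⟩ := hab
  induction p with
  | nil => rfl
  | cons hadj _ ih => exact (hf _ _ hadj).trans ih

namespace Matrix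

section PosDef

variable {ι : Type*} [Fintype ι] {A : Matrix ι ι ℝ}

theorem PosDef.nonneg_of_mulVec_nonneg (hA : A.PosDef) (hZ : ∀ i j, i ≠ j → A i j ≤ 0)
    {x : ι → ℝ} (hx : 0 ≤ A *ᵥ x) : 0 ≤ x := by
  have hdisjoint : ∀ i, x⁻ i * x⁺ i = 0 := fun i => by
    rcases le_total 0 (x i) with h | h <;> simp [Pi.negPart_apply, Pi.posPart_apply, h]
  have hcross : x⁻ ⬝ᵥ (A *ᵥ x⁺) ≤ 0 := by
    refine Finset.sum_nonpos fun i _ => ?_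
    rw [mulVec, dotProduct, Finset.mul_sum]
    refine Finset.sum_nonpos fun j _ => ?_
    rcases eq_or_ne i j with rfl | hij
    · rw [mul_left_comm, hdisjoint, mul_zero]
    · exact mul_nonpos_of_nonneg_of_nonpos (negPart_nonneg x i)
        (mul_nonpos_of_nonpos_of_nonneg (hZ i j hij) (posPart_nonneg x j))
  have hneg : x⁻ ⬝ᵥ (A *ᵥ x⁻) ≤ 0 := by
    have h : 0 ≤ x⁻ ⬝ᵥ (A *ᵥ (x⁺ - x⁻)) := by
      rw [posPart_sub_negPart]; exact dotProduct_nonneg_of_nonneg (negPart_nonneg x) hx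
    rw [mulVec_sub, dotProduct_sub] at h
    linarith
  have : x⁻ = 0 := by
    by_contra hne
    have := hA.dotProduct_mulVec_pos hne
    rw [star_trivial] at this
    linarith
  exact negPart_eq_zero.1 this

theorem PosDef.inv_apply_nonneg [DecidableEq ι] (hA : A.PosDef)
    (hZ : ∀ i j, i ≠ j → A i j ≤ 0) (i j : ι) : 0 ≤ A⁻¹ i j := by
  have hAinv : A *ᵥ (A⁻¹ *ᵥ Pi.single j 1) = Pi.single j 1 := by
    rw [mulVec_mulVec, mul_nonsing_inv _ ((isUnit_iff_isUnit_det A).1 hA.isUnit), one_mulVec]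
  have := hA.nonneg_of_mulVec_nonneg hZ (hAinv ▸ Pi.single_nonneg.2 zero_le_one) i
  simpa [mulVec_single] using this

end PosDef

variable {m n R : Type*} [Fintype m] [DecidableEq m]

noncomputable def schurComplement [CommRing R] (M : Matrix (m ⊕ n) (m ⊕ n) R) : Matrix n n R :=
  M.toBlocks₂₂ - M.toBlocks₂₁ * M.toBlocks₁₁⁻¹ * M.toBlocks₁₂

section CommRing

variable [CommRing R] {M : Matrix (m ⊕ n) (m ⊕ n) R}

theorem IsSymm.schurComplement (hM : M.IsSymm) : M.schurComplement.IsSymm := by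
  obtain ⟨hA, hBC, hCB, hD⟩ := isSymm_fromBlocks_iff.1 ((fromBlocks_toBlocks M).symm ▸ hM)
  rw [IsSymm, Matrix.schurComplement, transpose_sub, transpose_mul, transpose_mul,
    transpose_nonsing_inv, hA.eq, hD.eq, hBC, hCB, Matrix.mul_assoc]

variable [Fintype n]

theorem schurComplement_mulVec (hA : IsUnit M.toBlocks₁₁.det) {x : m → R} {z : n → R}
    (hx : M.toBlocks₁₁ *ᵥ x + M.toBlocks₁₂ *ᵥ z = 0) :
    M.schurComplement *ᵥ z = M.toBlocks₂₁ *ᵥ x + M.toBlocks₂₂ *ᵥ z := by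
  have hz : M.toBlocks₁₁⁻¹ *ᵥ (M.toBlocks₁₂ *ᵥ z) = -x := by
    rw [eq_neg_of_add_eq_zero_right hx, mulVec_neg, mulVec_mulVec, nonsing_inv_mul _ hA,
      one_mulVec]
  rw [schurComplement, sub_mulVec, ← mulVec_mulVec, ← mulVec_mulVec, hz, mulVec_neg,
    sub_neg_eq_add, add_comm]

theorem mulVec_sumElim_eq_schurComplement_mulVec (hA : IsUnit M.toBlocks₁₁.det) {x : m → R}
    {z : n → R} (hx : M.toBlocks₁₁ *ᵥ x + M.toBlocks₁₂ *ᵥ z = 0) :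
    M *ᵥ Sum.elim x z = Sum.elim (0 : m → R) (M.schurComplement *ᵥ z) := by
  conv_lhs => rw [← fromBlocks_toBlocks M]
  rw [fromBlocks_mulVec, Sum.elim_comp_inl, Sum.elim_comp_inr, hx, schurComplement_mulVec hA hx]

theorem schurComplement_mulVec_eq_zero (hA : IsUnit M.toBlocks₁₁.det) {x : m → R}
    {z : n → R} (h : M *ᵥ Sum.elim x z = 0) : M.schurComplement *ᵥ z = 0 := by
  rw [← fromBlocks_toBlocks M, fromBlocks_mulVec, Sum.elim_comp_inl, Sum.elim_comp_inr] at h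
  rw [schurComplement_mulVec hA (funext fun i => congrFun h (Sum.inl i))]
  exact funext fun j => congrFun h (Sum.inr j)

end CommRing

theorem schurComplement_apply_nonpos_of_ne {M : Matrix (m ⊕ n) (m ⊕ n) ℝ}
    (hM : ∀ i j, i ≠ j → M i j ≤ 0) (hA : ∀ i j, 0 ≤ M.toBlocks₁₁⁻¹ i j)
    {i j : n} (hij : i ≠ j) : M.schurComplement i j ≤ 0 := by
  have hprod : 0 ≤ (M.toBlocks₂₁ * M.toBlocks₁₁⁻¹ * M.toBlocks₁₂) i j := by
    simp only [mul_apply]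
    exact Finset.sum_nonneg fun l _ => mul_nonneg_of_nonpos_of_nonpos
      (Finset.sum_nonpos fun k _ => mul_nonpos_of_nonpos_of_nonneg
        (hM _ _ Sum.inr_ne_inl) (hA k l)) (hM _ _ Sum.inl_ne_inr)
  rw [schurComplement, sub_apply, sub_nonpos]
  exact (hM _ _ (Sum.inr_injective.ne hij)).trans hprod

end Matrix

section LapWeight

variable {V : Type*} [DecidableEq V]

def lapWeight (M : Matrix V V ℝ) : V → V → ℝ := fun u v => if u = v then 0 else -M u v

theorem lapWeight_self (M : Matrix V V ℝ) (u : V) : lapWeight M u u = 0 := if_pos rfl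

theorem lapWeight_of_ne (M : Matrix V V ℝ) {u v : V} (h : u ≠ v) : lapWeight M u v = -M u v :=
  if_neg h

theorem lapWeight_symm {M : Matrix V V ℝ} (hM : M.IsSymm) (u v : V) :
    lapWeight M u v = lapWeight M v u := by
  simp only [lapWeight, eq_comm (a := u), hM.apply u v]

theorem lapWeight_nonneg {M : Matrix V V ℝ} (hM : ∀ u v, u ≠ v → M u v ≤ 0) (u v : V) :
    0 ≤ lapWeight M u v := by
  unfold lapWeight
  split_ifs with h
  · exact le_rfl
  · exact neg_nonneg.2 (hM u v h)

end LapWeight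

section Laplacian

variable {V : Type*} [Fintype V] [DecidableEq V] {w : V → V → ℝ}

theorem lap_apply_self (w : V → V → ℝ) (u : V) : lap w u u = ∑ x, w u x := if_pos rfl

theorem lap_apply_of_ne (w : V → V → ℝ) {u v : V} (h : u ≠ v) : lap w u v = -w u v :=
  if_neg h

theorem lap_apply_nonpos_of_ne (hnonneg : ∀ u v, 0 ≤ w u v) {u v : V} (h : u ≠ v) :
    lap w u v ≤ 0 := by
  rw [lap_apply_of_ne w h, neg_nonpos]; exact hnonneg u v

theorem lap_isSymm (hsym : ∀ u v, w u v = w v u) : (lap w).IsSymm := by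
  ext u v
  rcases eq_or_ne u v with rfl | h
  · rfl
  · rw [transpose_apply, lap_apply_of_ne w h, lap_apply_of_ne w h.symm, hsym]

theorem lap_eq_diagonal_sub (hdiag : ∀ u, w u u = 0) :
    lap w = diagonal (fun u => ∑ v, w u v) - of w := by
  ext u v
  rcases eq_or_ne u v with rfl | h
  · simp [lap_apply_self, hdiag]
  · simp [lap_apply_of_ne w h, h]

theorem lap_mulVec_apply (hdiag : ∀ u, w u u = 0) (y : V → ℝ) (u : V) :
    (lap w *ᵥ y) u = ∑ v, w u v * (y u - y v) := by
  rw [lap_eq_diagonal_sub hdiag, sub_mulVec, Pi.sub_apply, mulVec_diagonal]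
  simp [mulVec, dotProduct, mul_sub, Finset.sum_mul]

theorem lap_mulVec_one (hdiag : ∀ u, w u u = 0) : lap w *ᵥ 1 = 0 := by
  ext u; simp [lap_mulVec_apply hdiag]

theorem lap_lapWeight {M : Matrix V V ℝ} (hM : M *ᵥ 1 = 0) : lap (lapWeight M) = M := by
  ext u v
  rcases eq_or_ne u v with rfl | h
  · have hrow : ∑ x, M u x = 0 := by simpa [mulVec, dotProduct] using congrFun hM u
    rw [lap_apply_self, ← Finset.add_sum_erase _ _ (Finset.mem_univ u), lapWeight_self, zero_add,
      Finset.sum_congr rfl fun x hx => lapWeight_of_ne M (Finset.ne_of_mem_erase hx).symm,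
      Finset.sum_neg_distrib, Finset.sum_erase_eq_sub (Finset.mem_univ u), hrow, zero_sub, neg_neg]
  · rw [lap_apply_of_ne _ h, lapWeight_of_ne M h, neg_neg]

variable (hsym : ∀ u v, w u v = w v u) (hdiag : ∀ u, w u u = 0) (hnonneg : ∀ u v, 0 ≤ w u v)
include hsym hdiag

theorem dotProduct_lap_mulVec (y : V → ℝ) :
    y ⬝ᵥ (lap w *ᵥ y) = 2⁻¹ * ∑ u, ∑ v, w u v * (y u - y v) ^ 2 := by
  have hswap :
      ∑ u, ∑ v, w u v * y u * (y u - y v) = ∑ u, ∑ v, w u v * y v * (y v - y u) := by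
    rw [Finset.sum_comm]; simp only [hsym]
  calc y ⬝ᵥ (lap w *ᵥ y) = ∑ u, ∑ v, w u v * y u * (y u - y v) := by
        simp only [dotProduct, lap_mulVec_apply hdiag, Finset.mul_sum]
        exact Finset.sum_congr rfl fun u _ => Finset.sum_congr rfl fun v _ => by ring
    _ = 2⁻¹ * (∑ u, ∑ v, w u v * y u * (y u - y v)
          + ∑ u, ∑ v, w u v * y v * (y v - y u)) := by
        rw [← hswap]; ring
    _ = 2⁻¹ * ∑ u, ∑ v, w u v * (y u - y v) ^ 2 := by
        simp only [← Finset.sum_add_distrib]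
        congr 1
        exact Finset.sum_congr rfl fun u _ => Finset.sum_congr rfl fun v _ => by ring

include hnonneg

theorem dotProduct_lap_mulVec_nonneg (y : V → ℝ) : 0 ≤ y ⬝ᵥ (lap w *ᵥ y) := by
  rw [dotProduct_lap_mulVec hsym hdiag]
  exact mul_nonneg (by norm_num) (Finset.sum_nonneg fun u _ => Finset.sum_nonneg fun v _ =>
    mul_nonneg (hnonneg u v) (sq_nonneg _))

theorem dotProduct_lap_mulVec_eq_zero_iff (y : V → ℝ) :
    y ⬝ᵥ (lap w *ᵥ y) = 0 ↔ ∀ u v, 0 < w u v → y u = y v := by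
  have hterm : ∀ u v, 0 ≤ w u v * (y u - y v) ^ 2 := fun u v =>
    mul_nonneg (hnonneg u v) (sq_nonneg _)
  rw [dotProduct_lap_mulVec hsym hdiag, mul_eq_zero, or_iff_right (by norm_num),
    Fintype.sum_eq_zero_iff_of_nonneg fun u => Finset.sum_nonneg fun v _ => hterm u v]
  refine funext_iff.trans <| forall_congr' fun u => ?_
  rw [Pi.zero_apply, Fintype.sum_eq_zero_iff_of_nonneg (hterm u)]
  refine funext_iff.trans <| forall_congr' fun v => ?_
  rw [Pi.zero_apply, mul_eq_zero, sq_eq_zero_iff, sub_eq_zero, or_iff_not_imp_left,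
    (hnonneg u v).lt_iff_ne', ne_eq]

theorem eq_of_dotProduct_lap_mulVec_eq_zero
    (hconn : (SimpleGraph.fromRel fun u v => 0 < w u v).Connected) {y : V → ℝ}
    (hy : y ⬝ᵥ (lap w *ᵥ y) = 0) (a b : V) : y a = y b := by
  have hedge := (dotProduct_lap_mulVec_eq_zero_iff hsym hdiag hnonneg y).1 hy
  refine (hconn.preconnected a b).apply_eq_of_adj fun u v huv => ?_
  rcases ((SimpleGraph.fromRel_adj _ u v).1 huv).2 with h | h
  · exact hedge u v h
  · exact (hedge v u h).symm

end Laplacian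

section Blocks

variable {Fv Cv : Type*} [Fintype Fv] [Fintype Cv] [DecidableEq Fv] [DecidableEq Cv]
  [Nonempty Cv] {w : Fv ⊕ Cv → Fv ⊕ Cv → ℝ}
  (hsym : ∀ u v, w u v = w v u) (hdiag : ∀ u, w u u = 0) (hnonneg : ∀ u v, 0 ≤ w u v)
  (hconn : (SimpleGraph.fromRel fun u v => 0 < w u v).Connected)
include hsym hdiag hnonneg hconn

theorem posDef_toBlocks₁₁_lap : (lap w).toBlocks₁₁.PosDef := by
  refine posDef_iff_dotProduct_mulVec.2 ⟨?_, fun x hx => ?_⟩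
  · rw [isHermitian_iff_isSymm]
    exact (isSymm_fromBlocks_iff.1 ((fromBlocks_toBlocks (lap w)).symm ▸ lap_isSymm hsym)).1
  have hquad :
      x ⬝ᵥ ((lap w).toBlocks₁₁ *ᵥ x) = Sum.elim x 0 ⬝ᵥ (lap w *ᵥ Sum.elim x 0) := by
    conv_rhs => rw [← fromBlocks_toBlocks (lap w)]
    simp [fromBlocks_mulVec, sumElim_dotProduct_sumElim]
  rw [star_trivial, hquad]
  refine (dotProduct_lap_mulVec_nonneg hsym hdiag hnonneg _).lt_of_ne' fun h0 => hx ?_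
  obtain ⟨c⟩ := ‹Nonempty Cv›
  ext i
  simpa using
    eq_of_dotProduct_lap_mulVec_eq_zero hsym hdiag hnonneg hconn h0 (Sum.inl i) (Sum.inr c)

theorem connected_of_lap_eq_schurComplement {w' : Cv → Cv → ℝ}
    (hsym' : ∀ u v, w' u v = w' v u) (hdiag' : ∀ u, w' u u = 0)
    (hnonneg' : ∀ u v, 0 ≤ w' u v)
    (hw' : lap w' = (lap w).schurComplement) :
    (SimpleGraph.fromRel fun u v => 0 < w' u v).Connected := by
  classical
  set G' := SimpleGraph.fromRel fun u v => 0 < w' u v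
  have hA := (isUnit_iff_isUnit_det _).1 (posDef_toBlocks₁₁_lap hsym hdiag hnonneg hconn).isUnit
  refine (SimpleGraph.connected_iff G').2 ⟨fun c₀ c₁ => ?_, inferInstance⟩
  by_contra hne
  let z : Cv → ℝ := fun c => if G'.Reachable c₀ c then 1 else 0
  have hz : z ⬝ᵥ (lap w' *ᵥ z) = 0 := by
    refine (dotProduct_lap_mulVec_eq_zero_iff hsym' hdiag' hnonneg' z).2 fun c d hcd => ?_
    rcases eq_or_ne c d with rfl | hcd'
    · rfl
    have hadj : G'.Adj c d := (SimpleGraph.fromRel_adj _ c d).2 ⟨hcd', Or.inl hcd⟩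
    exact if_congr ⟨fun h => h.trans hadj.reachable, fun h => h.trans hadj.symm.reachable⟩
      rfl rfl
  set x := -((lap w).toBlocks₁₁⁻¹ *ᵥ ((lap w).toBlocks₁₂ *ᵥ z))
  have hx : (lap w).toBlocks₁₁ *ᵥ x + (lap w).toBlocks₁₂ *ᵥ z = 0 := by
    rw [mulVec_neg, mulVec_mulVec, mul_nonsing_inv _ hA, one_mulVec, neg_add_cancel]
  have hy : Sum.elim x z ⬝ᵥ (lap w *ᵥ Sum.elim x z) = 0 := by
    rw [mulVec_sumElim_eq_schurComplement_mulVec hA hx, sumElim_dotProduct_sumElim, ← hw', hz,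
      dotProduct_zero, zero_add]
  have hz₀₁ :=
    eq_of_dotProduct_lap_mulVec_eq_zero hsym hdiag hnonneg hconn hy (Sum.inr c₀) (Sum.inr c₁)
  simp [z, hne] at hz₀₁

end Blocks

theorem stmt6_general {Fv Cv : Type*} [Fintype Fv] [Fintype Cv] [DecidableEq Fv] [DecidableEq Cv]
    [Nonempty Cv]
    (w : (Fv ⊕ Cv) → (Fv ⊕ Cv) → ℝ)
    (hsym : ∀ u v, w u v = w v u) (hdiag : ∀ u, w u u = 0)
    (hnonneg : ∀ u v, 0 ≤ w u v)
    (hconn : (SimpleGraph.fromRel (fun u v => 0 < w u v)).Connected) :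
    ∃ w' : Cv → Cv → ℝ,
      (∀ u v, w' u v = w' v u) ∧ (∀ u v, 0 ≤ w' u v) ∧ (∀ u, w' u u = 0) ∧
      (lap w).toBlocks₂₂ -
          (lap w).toBlocks₂₁ * ((lap w).toBlocks₁₁)⁻¹ * (lap w).toBlocks₁₂ = lap w' ∧
      (SimpleGraph.fromRel (fun u v => 0 < w' u v)).Connected := by
  set S := (lap w).schurComplement
  have hA := posDef_toBlocks₁₁_lap hsym hdiag hnonneg hconn
  have hZ : ∀ u v, u ≠ v → lap w u v ≤ 0 := fun u v => lap_apply_nonpos_of_ne hnonneg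
  have hsymS := lapWeight_symm (lap_isSymm hsym).schurComplement
  have hnonnegS : ∀ c d, 0 ≤ lapWeight S c d := lapWeight_nonneg fun c d =>
    schurComplement_apply_nonpos_of_ne hZ
      (hA.inv_apply_nonneg fun i j hij => hZ _ _ (Sum.inl_injective.ne hij))
  have hlapS : lap (lapWeight S) = S := by
    refine lap_lapWeight (schurComplement_mulVec_eq_zero
      ((isUnit_iff_isUnit_det _).1 hA.isUnit) (x := 1) ?_)
    rw [Sum.elim_one_one, lap_mulVec_one hdiag]
  exact ⟨lapWeight S, hsymS, hnonnegS, lapWeight_self S, hlapS.symm,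
    connected_of_lap_eq_schurComplement hsym hdiag hnonneg hconn hsymS (lapWeight_self S)
      hnonnegS hlapS⟩

theorem stmt6 {Fv Cv : Type*} [Fintype Fv] [Fintype Cv] [DecidableEq Fv] [DecidableEq Cv]
    [Nonempty Fv] [Nonempty Cv]
    (w : (Fv ⊕ Cv) → (Fv ⊕ Cv) → ℝ)
    (hsym : ∀ u v, w u v = w v u) (hdiag : ∀ u, w u u = 0)
    (hnonneg : ∀ u v, 0 ≤ w u v)
    (hconn : (SimpleGraph.fromRel (fun u v => 0 < w u v)).Connected) :
    ∃ w' : Cv → Cv → ℝ,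
      (∀ u v, w' u v = w' v u) ∧ (∀ u v, 0 ≤ w' u v) ∧ (∀ u, w' u u = 0) ∧
      (lap w).toBlocks₂₂ -
          (lap w).toBlocks₂₁ * ((lap w).toBlocks₁₁)⁻¹ * (lap w).toBlocks₁₂ = lap w' ∧
      (SimpleGraph.fromRel (fun u v => 0 < w' u v)).Connected :=
  stmt6_general w hsym hdiag hnonneg hconn
end

section
/- Let M = X + Y be a symmetric 5-diagonally-dominant matrix where X is diagonal with positive diagonal and Y is a Laplacian, and let Z = Σ_{i=0}^{l} X^{-1} (-Y X^{-1})^i for an odd integer l ≥ log₂(3/ε), where 0 < ε < 1. Then M ⪯ Z^{-1} ⪯ M + ε Y. -/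
/-!
Conjugating by `W = X^{1/2}` turns `Z` into `W⁻¹ S W⁻¹` with `S = ∑_{k ≤ l} (-A)^k` for the
normalized Laplacian `A = W⁻¹ Y W⁻¹`, and turns `M` into `W (1 + A) W`. The 5-diagonal dominance
gives `0 ≤ A ≤ 1/2`, so by the functional calculus both inequalities reduce to the scalar bounds
`1 + x ≤ 1 / p(x) ≤ 1 + x + ε x` on `[0, 1/2]`, where `p(x) (1 + x) = 1 - x^{l+1}` because `l` is
odd, and `x^l ≤ 2^{-l} ≤ ε / 3` controls the defect.
-/

open Matrix BigOperators

/-- `Y` is a Laplacian matrix: symmetric, nonpositive off-diagonal entries, zero row sums. -/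
def IsLapMatrix {n : Type*} [Fintype n] (Y : Matrix n n ℝ) : Prop :=
  Yᵀ = Y ∧ (∀ i j, i ≠ j → Y i j ≤ 0) ∧ (∀ i, ∑ j, Y i j = 0)

open Finset
open scoped MatrixOrder

theorem sum_range_neg_pow_mul_one_add {l : ℕ} (hl : Odd l) (x : ℝ) :
    (∑ k ∈ range (l + 1), (-x) ^ k) * (1 + x) = 1 - x ^ (l + 1) := by
  have h := geom_sum_mul (-x) (l + 1)
  rw [hl.add_one.neg_pow] at h
  linear_combination -h

theorem sum_range_neg_pow_pos {l : ℕ} (hl : Odd l) {x : ℝ} (hx₀ : 0 ≤ x) (hx₁ : x < 1) :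
    0 < ∑ k ∈ range (l + 1), (-x) ^ k := by
  have h := sum_range_neg_pow_mul_one_add hl x
  have : x ^ (l + 1) < 1 := pow_lt_one₀ hx₀ hx₁ (by omega)
  by_contra! hneg
  nlinarith

theorem one_add_le_inv_sum_range_neg_pow {l : ℕ} (hl : Odd l) {x : ℝ} (hx₀ : 0 ≤ x)
    (hx₁ : x < 1) : 1 + x ≤ (∑ k ∈ range (l + 1), (-x) ^ k)⁻¹ := by
  have hp := sum_range_neg_pow_pos hl hx₀ hx₁
  rw [le_inv_comm₀ (by positivity) hp, inv_eq_one_div, le_div_iff₀ (by positivity),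
    sum_range_neg_pow_mul_one_add hl]
  linarith [pow_nonneg hx₀ (l + 1)]

theorem inv_sum_range_neg_pow_le {l : ℕ} (hl : Odd l) {ε x : ℝ} (hε : 3 ≤ 2 ^ l * ε)
    (hx₀ : 0 ≤ x) (hx₁ : x ≤ 1 / 2) :
    (∑ k ∈ range (l + 1), (-x) ^ k)⁻¹ ≤ 1 + x + ε * x := by
  have hp := sum_range_neg_pow_pos hl hx₀ (by linarith)
  have h := sum_range_neg_pow_mul_one_add hl x
  have hxl : x ^ l * 2 ^ l ≤ 1 := by
    rw [← mul_pow]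
    exact pow_le_one₀ (by positivity) (by linarith)
  have h2l : 2 ≤ (2 : ℝ) ^ l := by
    calc (2 : ℝ) = 2 ^ 1 := by norm_num
      _ ≤ 2 ^ l := pow_le_pow_right₀ (by norm_num) hl.pos
  have hdefect : (1 + x + ε * x) * x ^ (l + 1) ≤ ε * x := by
    have hε₀ : 0 < ε := by nlinarith
    have : (1 + x + ε * x) * (x ^ l * 2 ^ l) ≤ ε * 2 ^ l :=
      calc (1 + x + ε * x) * (x ^ l * 2 ^ l) ≤ (1 + x + ε * x) * 1 :=
            mul_le_mul_of_nonneg_left hxl (by positivity)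
        _ ≤ 3 / 2 + ε / 2 := by nlinarith
        _ ≤ ε * 2 ^ l := by nlinarith [mul_le_mul_of_nonneg_left h2l hε₀.le]
    rw [pow_succ]
    nlinarith [pow_pos (two_pos : (0 : ℝ) < 2) l, pow_nonneg hx₀ l]
  rw [inv_le_iff_one_le_mul₀ hp]
  refine le_of_mul_le_mul_left ?_ (by linarith : (0 : ℝ) < 1 + x)
  calc (1 + x) * 1 ≤ (1 + x + ε * x) * (1 - x ^ (l + 1)) := by linarith
    _ = (1 + x) * ((1 + x + ε * x) * ∑ k ∈ range (l + 1), (-x) ^ k) := by rw [← h]; ring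

namespace Matrix

section FunctionalCalculus

variable {n 𝕜 : Type*} [Fintype n] [DecidableEq n] [RCLike 𝕜] {A : Matrix n n 𝕜}

theorem inv_cfc (hA : IsSelfAdjoint A) (f : ℝ → ℝ) (hf : ∀ x ∈ spectrum ℝ A, f x ≠ 0) :
    (cfc f A)⁻¹ = cfc (fun x => (f x)⁻¹) A := by
  rw [cfc_inv f A hf (A.finite_real_spectrum.continuousOn f), nonsing_inv_eq_ringInverse]

theorem sum_range_neg_pow_eq_cfc (hA : IsSelfAdjoint A) (m : ℕ) :
    ∑ k ∈ range m, (-A) ^ k = cfc (fun x : ℝ => ∑ k ∈ range m, (-x) ^ k) A := by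
  have h := cfc_sum (fun k (x : ℝ) => (-x) ^ k) A (range m)
  simp only [Finset.sum_fn] at h
  rw [h]
  exact sum_congr rfl fun k _ => by rw [cfc_pow (fun x : ℝ => -x) k A, cfc_neg_id A]

theorem spectrum_subset_Icc (hA₀ : 0 ≤ A) (hA₁ : A ≤ (1 / 2 : ℝ) • 1) :
    spectrum ℝ A ⊆ Set.Icc 0 (1 / 2) := fun x hx =>
  ⟨spectrum_nonneg_of_nonneg hA₀ hx, (le_algebraMap_iff_spectrum_le hA₀.isSelfAdjoint).mp
    (by rwa [Algebra.algebraMap_eq_smul_one]) x hx⟩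

theorem inv_sum_range_neg_pow_mem_Icc (hA₀ : 0 ≤ A) (hA₁ : A ≤ (1 / 2 : ℝ) • 1) {l : ℕ}
    (hl : Odd l) {ε : ℝ} (hε : 3 ≤ 2 ^ l * ε) :
    (∑ k ∈ range (l + 1), (-A) ^ k)⁻¹ ∈ Set.Icc (1 + A) (1 + A + ε • A) := by
  have hA := hA₀.isSelfAdjoint
  have hspec := spectrum_subset_Icc hA₀ hA₁
  have hp : ∀ x ∈ spectrum ℝ A, ∑ k ∈ range (l + 1), (-x) ^ k ≠ 0 := fun x hx =>
    (sum_range_neg_pow_pos hl (hspec hx).1 (by linarith [(hspec hx).2])).ne'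
  rw [sum_range_neg_pow_eq_cfc hA, inv_cfc hA _ hp]
  have h₁ : cfc (fun x : ℝ => 1 + x) A = 1 + A := by
    rw [cfc_const_add (1 : ℝ) (fun x => x) A, cfc_id' ℝ A, map_one]
  have h₂ : cfc (fun x : ℝ => 1 + x + ε * x) A = 1 + A + ε • A := by
    rw [cfc_add (a := A) (fun x : ℝ => 1 + x) (fun x => ε * x), h₁, cfc_const_mul_id ε A]
  rw [← h₂, ← h₁]
  have hcont (f : ℝ → ℝ) := A.finite_real_spectrum.continuousOn f
  exact ⟨cfc_mono (fun x hx => one_add_le_inv_sum_range_neg_pow hl (hspec hx).1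
      (by linarith [(hspec hx).2])) (hcont _) (hcont _),
    cfc_mono (fun x hx => inv_sum_range_neg_pow_le hl hε (hspec hx).1 (hspec hx).2)
      (hcont _) (hcont _)⟩

end FunctionalCalculus

theorem IsDiag.posDef {n : Type*} [DecidableEq n] {X : Matrix n n ℝ} (hX : X.IsDiag)
    (hpos : ∀ i, 0 < X i i) : X.PosDef := by
  rw [← hX.diagonal_diag, posDef_diagonal_iff]
  exact hpos

variable {n : Type*} [Fintype n] [DecidableEq n]

theorem posSemidef_of_sum_abs_le_diag {A : Matrix n n ℝ} (hA : A.IsSymm)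
    (h : ∀ i, ∑ j ∈ univ.erase i, |A i j| ≤ A i i) : A.PosSemidef := by
  refine posSemidef_iff_isHermitian_and_spectrum_nonneg.mpr
    ⟨isHermitian_iff_isSymm.mpr hA, fun μ hμ => ?_⟩
  rw [← spectrum_toLin', ← Module.End.hasEigenvalue_iff_mem_spectrum] at hμ
  obtain ⟨k, hk⟩ := eigenvalue_mem_ball hμ
  rw [Metric.mem_closedBall, Real.dist_eq] at hk
  simp only [Real.norm_eq_abs] at hk
  show 0 ≤ μ
  linarith [h k, neg_abs_le (μ - A k k)]

theorem inv_sum_range_mul_neg_mul_pow {W : Matrix n n ℝ} (hW : IsUnit W.det)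
    (Y : Matrix n n ℝ) (m : ℕ) :
    (∑ k ∈ range m, (W * W)⁻¹ * (-(Y * (W * W)⁻¹)) ^ k)⁻¹
      = W * (∑ k ∈ range m, (-(W⁻¹ * Y * W⁻¹)) ^ k)⁻¹ * W := by
  have hsemi : SemiconjBy W⁻¹ (-(Y * (W⁻¹ * W⁻¹))) (-(W⁻¹ * Y * W⁻¹)) := by
    simp only [SemiconjBy, Matrix.mul_neg, Matrix.neg_mul, Matrix.mul_assoc]
  have hterm (k : ℕ) : W⁻¹ * W⁻¹ * (-(Y * (W⁻¹ * W⁻¹))) ^ k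
      = W⁻¹ * (-(W⁻¹ * Y * W⁻¹)) ^ k * W⁻¹ := by
    rw [Matrix.mul_assoc, (hsemi.pow_right k).eq, ← Matrix.mul_assoc]
  simp only [Matrix.mul_inv_rev, hterm, ← Finset.mul_sum, ← Finset.sum_mul,
    nonsing_inv_nonsing_inv _ hW, Matrix.mul_assoc]

end Matrix

namespace IsLapMatrix

variable {n : Type*} [Fintype n] [DecidableEq n] {Y : Matrix n n ℝ}

theorem diag_eq_sum_abs (hY : IsLapMatrix Y) (i : n) :
    Y i i = ∑ j ∈ univ.erase i, |Y i j| := by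
  have hrow := hY.2.2 i
  rw [← add_sum_erase _ _ (mem_univ i)] at hrow
  rw [sum_congr rfl fun j hj => abs_of_nonpos (hY.2.1 i j (ne_of_mem_erase hj).symm),
    sum_neg_distrib]
  linarith

theorem posSemidef (hY : IsLapMatrix Y) : Y.PosSemidef :=
  posSemidef_of_sum_abs_le_diag hY.1 fun i => (hY.diag_eq_sum_abs i).ge

theorem four_mul_diag_le {X M : Matrix n n ℝ} (hY : IsLapMatrix Y) (hM : M = X + Y)
    (hX : X.IsDiag) (h5dd : ∀ i, 5 * ∑ j ∈ univ.erase i, |M i j| ≤ M i i) (i : n) :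
    4 * Y i i ≤ X i i := by
  have hoff : ∑ j ∈ univ.erase i, |M i j| = Y i i := by
    rw [hY.diag_eq_sum_abs i]
    refine sum_congr rfl fun j hj => ?_
    rw [hM, Matrix.add_apply, hX (ne_of_mem_erase hj).symm, zero_add]
  have := h5dd i
  rw [hoff, hM, Matrix.add_apply] at this
  linarith

theorem le_half_smul {X : Matrix n n ℝ} (hY : IsLapMatrix Y) (hX : X.IsDiag)
    (h : ∀ i, 4 * Y i i ≤ X i i) : Y ≤ (1 / 2 : ℝ) • X := by
  refine le_iff.mpr (posSemidef_of_sum_abs_le_diag ?_ fun i => ?_)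
  · exact (hX.isSymm.smul _).sub hY.1
  · have hoff : ∑ j ∈ univ.erase i, |((1 / 2 : ℝ) • X - Y) i j| = Y i i := by
      rw [hY.diag_eq_sum_abs i]
      refine sum_congr rfl fun j hj => ?_
      rw [Matrix.sub_apply, Matrix.smul_apply, hX (ne_of_mem_erase hj).symm, smul_zero, zero_sub,
        abs_neg]
    rw [hoff, Matrix.sub_apply, Matrix.smul_apply, smul_eq_mul]
    linarith [h i]

end IsLapMatrix

theorem stmt8_general {n : Type*} [Fintype n] [DecidableEq n]
    (X Y M : Matrix n n ℝ) (ε : ℝ) (l : ℕ)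
    (hM : M = X + Y) (hX : X.IsDiag) (hXpos : ∀ i, 0 < X i i) (hY : IsLapMatrix Y)
    (h5dd : ∀ i, 5 * ∑ j ∈ Finset.univ.erase i, |M i j| ≤ M i i)
    (hε : 0 < ε) (hl : Odd l) (hl2 : Real.logb 2 (3 / ε) ≤ l) :
    ((∑ i ∈ Finset.range (l + 1), X⁻¹ * (-(Y * X⁻¹)) ^ i)⁻¹ - M).PosSemidef ∧
    (M + ε • Y - (∑ i ∈ Finset.range (l + 1), X⁻¹ * (-(Y * X⁻¹)) ^ i)⁻¹).PosSemidef := by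
  have hε' : 3 ≤ 2 ^ l * ε := by
    rwa [Real.logb_le_iff_le_rpow one_lt_two (by positivity), Real.rpow_natCast,
      div_le_iff₀ hε] at hl2
  have hXpd := hX.posDef hXpos
  set W := CFC.sqrt X
  have hW : IsSelfAdjoint W := (CFC.sqrt_nonneg X).isSelfAdjoint
  have hWW : W * W = X := CFC.sqrt_mul_sqrt_self X hXpd.posSemidef.nonneg
  have hWu : IsUnit W.det :=
    (isUnit_iff_isUnit_det W).mp ((CFC.isUnit_sqrt_iff X hXpd.posSemidef.nonneg).mpr hXpd.isUnit)
  have hWi : IsSelfAdjoint W⁻¹ := IsHermitian.inv hW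
  have hconj (B : Matrix n n ℝ) : W * (W⁻¹ * B * W⁻¹) * W = B := by
    rw [mul_assoc, mul_assoc, nonsing_inv_mul _ hWu, mul_one, mul_nonsing_inv_cancel_left _ _ hWu]
  set A := W⁻¹ * Y * W⁻¹
  have hA₀ : 0 ≤ A := by
    simpa using hWi.conjugate_le_conjugate (nonneg_iff_posSemidef.mpr hY.posSemidef)
  have hA₁ : A ≤ (1 / 2 : ℝ) • 1 := by
    have := hWi.conjugate_le_conjugate (hY.le_half_smul hX (hY.four_mul_diag_le hM hX h5dd))
    rwa [mul_smul_comm, smul_mul_assoc, ← hWW, ← mul_assoc, nonsing_inv_mul _ hWu, one_mul,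
      mul_nonsing_inv _ hWu] at this
  have hM' : W * (1 + A) * W = M := by
    rw [mul_add, add_mul, mul_one, hWW, hconj, hM]
  have hMY : W * (1 + A + ε • A) * W = M + ε • Y := by
    rw [mul_add, add_mul, hM', mul_smul_comm, smul_mul_assoc, hconj]
  obtain ⟨h₁, h₂⟩ := inv_sum_range_neg_pow_mem_Icc hA₀ hA₁ hl hε'
  rw [← hWW, inv_sum_range_mul_neg_mul_pow hWu, ← hMY, ← hM']
  exact ⟨le_iff.mp (hW.conjugate_le_conjugate h₁), le_iff.mp (hW.conjugate_le_conjugate h₂)⟩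

theorem stmt8 {n : Type*} [Fintype n] [DecidableEq n]
    (X Y M : Matrix n n ℝ) (ε : ℝ) (l : ℕ)
    (hM : M = X + Y) (hX : X.IsDiag) (hXpos : ∀ i, 0 < X i i) (hY : IsLapMatrix Y)
    (h5dd : ∀ i, 5 * ∑ j ∈ Finset.univ.erase i, |M i j| ≤ M i i)
    (hε : 0 < ε) (hε1 : ε < 1) (hl : Odd l) (hl2 : Real.logb 2 (3 / ε) ≤ l) :
    ((∑ i ∈ Finset.range (l + 1), X⁻¹ * (-(Y * X⁻¹)) ^ i)⁻¹ - M).PosSemidef ∧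
    (M + ε • Y - (∑ i ∈ Finset.range (l + 1), X⁻¹ * (-(Y * X⁻¹)) ^ i)⁻¹).PosSemidef :=
  stmt8_general X Y M ε l hM hX hXpos hY h5dd hε hl hl2
end

section
/- A C-terminal walk composition is α-bounded: let G be a weighted multi-graph such that each multi-edge e is α-bounded w.r.t. a Laplacian L (i.e., w(e)·b_eᵀ L⁺ b_e ≤ α). For any walk W = (u₀, e₁, u₁, …, e_l, u_l) in G with u₀ ≠ u_l, the multi-edge f between u₀ and u_l with weight w(f) = 1/(Σ_{i=1}^{l} 1/w(e_i)) satisfies w(f)·b_{u₀u_l}ᵀ L⁺ b_{u₀u_l} ≤ α. -/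
open Matrix BigOperators

/-- The pair vector `b_{uv}` with `+1` at `u`, `-1` at `v`, and `0` elsewhere. -/
def pairVec {V : Type*} [DecidableEq V] (u v : V) : V → ℝ :=
  fun x => (if x = u then (1 : ℝ) else 0) - (if x = v then (1 : ℝ) else 0)

section Aux
variable {V : Type*} [Fintype V] [DecidableEq V] {w : V → V → ℝ}

lemma lap_mulVec (hdiag : ∀ u, w u u = 0) (x : V → ℝ) (a : V) :
    (lap w).mulVec x a = ∑ b, w a b * (x a - x b) := by
  have hentry : ∀ b, lap w a b = (if a = b then ∑ c, w a c else 0) - w a b := by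
    intro b
    by_cases h : a = b
    · subst h; simp [lap, hdiag a]
    · simp [lap, h]
  unfold Matrix.mulVec dotProduct
  simp only [hentry, sub_mul, ite_mul, zero_mul]
  rw [Finset.sum_sub_distrib, Finset.sum_ite_eq, if_pos (Finset.mem_univ a),
    Finset.sum_mul, ← Finset.sum_sub_distrib]
  exact Finset.sum_congr rfl fun b _ => by ring

lemma dot_pair (y : V → ℝ) (a b : V) : pairVec a b ⬝ᵥ y = y a - y b := by
  simp [pairVec, dotProduct, sub_mul, Finset.sum_sub_distrib, ite_mul]

lemma pair_sum_zero (a b : V) : ∑ x, pairVec a b x = 0 := by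
  simp [pairVec, Finset.sum_sub_distrib]

lemma lap_sym (hsym : ∀ u v, w u v = w v u) : (lap w)ᵀ = lap w := by
  ext a b
  by_cases h : a = b
  · subst h; simp [lap]
  · simp [lap, Matrix.transpose_apply, h, Ne.symm h, hsym a b]

lemma two_mul_quad (hsym : ∀ u v, w u v = w v u) (hdiag : ∀ u, w u u = 0) (x : V → ℝ) :
    2 * (x ⬝ᵥ (lap w).mulVec x) = ∑ a, ∑ b, w a b * (x a - x b) ^ 2 := by
  have hQ : x ⬝ᵥ (lap w).mulVec x = ∑ a, ∑ b, x a * (w a b * (x a - x b)) := by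
    unfold dotProduct
    refine Finset.sum_congr rfl fun a _ => ?_
    rw [lap_mulVec hdiag, Finset.mul_sum]
  have hQ' : x ⬝ᵥ (lap w).mulVec x = ∑ a, ∑ b, x b * (w a b * (x b - x a)) := by
    rw [hQ, Finset.sum_comm]
    refine Finset.sum_congr rfl fun a _ => Finset.sum_congr rfl fun b _ => ?_
    rw [hsym a b]
  rw [two_mul]
  nth_rewrite 1 [hQ]
  rw [hQ', ← Finset.sum_add_distrib]
  refine Finset.sum_congr rfl fun a _ => ?_
  rw [← Finset.sum_add_distrib]
  refine Finset.sum_congr rfl fun b _ => ?_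
  ring

lemma quad_nonneg (hsym : ∀ u v, w u v = w v u) (hdiag : ∀ u, w u u = 0)
    (hnonneg : ∀ u v, 0 ≤ w u v) (x : V → ℝ) :
    0 ≤ x ⬝ᵥ (lap w).mulVec x := by
  have h := two_mul_quad hsym hdiag x
  nlinarith [Finset.sum_nonneg (fun a (_ : a ∈ Finset.univ) =>
    Finset.sum_nonneg (fun b (_ : b ∈ Finset.univ) =>
      mul_nonneg (hnonneg a b) (sq_nonneg (x a - x b))))]

lemma ker_const (hsym : ∀ u v, w u v = w v u) (hdiag : ∀ u, w u u = 0)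
    (hnonneg : ∀ u v, 0 ≤ w u v)
    (hconn : (SimpleGraph.fromRel (fun u v => 0 < w u v)).Connected)
    (x : V → ℝ) (hx : (lap w).mulVec x = 0) : ∀ a b, x a = x b := by
  have hq : ∑ a, ∑ b, w a b * (x a - x b) ^ 2 = 0 := by
    rw [← two_mul_quad hsym hdiag, hx]
    simp
  have hterm : ∀ a b, w a b * (x a - x b) ^ 2 = 0 := by
    intro a b
    have hnn : ∀ a ∈ Finset.univ, (0:ℝ) ≤ ∑ b, w a b * (x a - x b) ^ 2 :=
      fun a _ => Finset.sum_nonneg fun b _ => mul_nonneg (hnonneg a b) (sq_nonneg _)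
    have h1 := (Finset.sum_eq_zero_iff_of_nonneg hnn).1 hq a (Finset.mem_univ a)
    have hnn2 : ∀ b ∈ Finset.univ, (0:ℝ) ≤ w a b * (x a - x b) ^ 2 :=
      fun b _ => mul_nonneg (hnonneg a b) (sq_nonneg _)
    exact (Finset.sum_eq_zero_iff_of_nonneg hnn2).1 h1 b (Finset.mem_univ b)
  have hadj : ∀ a b, (SimpleGraph.fromRel (fun u v => 0 < w u v)).Adj a b → x a = x b := by
    intro a b hab
    rw [SimpleGraph.fromRel_adj] at hab
    have hw : 0 < w a b := by
      rcases hab.2 with h | h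
      · exact h
      · rwa [hsym]
    have := hterm a b
    have h2 : (x a - x b) ^ 2 = 0 := by
      rcases mul_eq_zero.1 this with h | h
      · exact absurd h (ne_of_gt hw)
      · exact h
    have := pow_eq_zero_iff (n := 2) (by norm_num) |>.1 h2
    linarith [sub_eq_zero.1 this]
  intro a b
  obtain ⟨p⟩ := hconn.preconnected a b
  induction p with
  | nil => rfl
  | cons h q ih => exact (hadj _ _ h).trans ih

lemma colsum (hsym : ∀ u v, w u v = w v u) (hdiag : ∀ u, w u u = 0) (v : V) :
    ∑ a, lap w a v = 0 := by
  have hentry : ∀ a, lap w a v = (if a = v then ∑ c, w v c else 0) - w a v := by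
    intro a
    by_cases h : a = v
    · subst h; simp [lap, hdiag a]
    · simp [lap, h]
  simp only [hentry]
  rw [Finset.sum_sub_distrib]
  simp only [Finset.sum_ite_eq', Finset.mem_univ, if_true]
  rw [sub_eq_zero]
  exact Finset.sum_congr rfl fun a _ => hsym v a

lemma sum_lap_mulVec (hsym : ∀ u v, w u v = w v u) (hdiag : ∀ u, w u u = 0) (y : V → ℝ) :
    ∑ a, (lap w).mulVec y a = 0 := by
  unfold Matrix.mulVec dotProduct
  rw [Finset.sum_comm]
  refine Finset.sum_eq_zero fun b _ => ?_
  rw [← Finset.sum_mul, colsum hsym hdiag b, zero_mul]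

lemma proj_eq (hsym : ∀ u v, w u v = w v u) (hdiag : ∀ u, w u u = 0)
    (hnonneg : ∀ u v, 0 ≤ w u v)
    (hconn : (SimpleGraph.fromRel (fun u v => 0 < w u v)).Connected)
    {Lp : Matrix V V ℝ} (hLp : IsMoorePenrose (lap w) Lp)
    (b : V → ℝ) (hb : ∑ a, b a = 0) :
    (lap w).mulVec (Lp.mulVec b) = b := by
  have : Nonempty V := hconn.nonempty
  obtain ⟨h1, h2, h3, h4⟩ := hLp
  set L := lap w with hL
  set c : V → ℝ := b - L.mulVec (Lp.mulVec b) with hc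
  have hLc : L.mulVec c = 0 := by
    have hvm : Matrix.vecMul c L = 0 := by
      have hmv : L.mulVec (Lp.mulVec b) = Matrix.vecMul b (L * Lp) := by
        rw [Matrix.mulVec_mulVec]
        nth_rewrite 1 [← h3]
        exact Matrix.mulVec_transpose _ b
      have heq : Matrix.vecMul c L =
          Matrix.vecMul b L - Matrix.vecMul (Matrix.vecMul b (L * Lp)) L := by
        rw [hc, hmv, Matrix.sub_vecMul]
      rw [heq, Matrix.vecMul_vecMul, h1, sub_self]
    calc L.mulVec c = Lᵀ.mulVec c := by rw [lap_sym hsym]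
    _ = Matrix.vecMul c L := Matrix.mulVec_transpose L c
    _ = 0 := hvm
  have hconst := ker_const hsym hdiag hnonneg hconn c hLc
  have hsumc : ∑ a, c a = 0 := by
    simp only [hc, Pi.sub_apply, Finset.sum_sub_distrib, hb,
      sum_lap_mulVec hsym hdiag, sub_zero]
    rw [zero_sub, neg_eq_zero]
    exact sum_lap_mulVec hsym hdiag _
  have hc0 : ∀ a, c a = 0 := by
    intro a
    have h : ∑ a', c a' = (Fintype.card V : ℝ) * c a := by
      rw [Finset.sum_congr rfl fun a' _ => (hconst a' a)]
      simp [Finset.sum_const, nsmul_eq_mul]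
    rw [hsumc] at h
    have hcard : (Fintype.card V : ℝ) ≠ 0 := Nat.cast_ne_zero.2 Fintype.card_pos.ne'
    rcases mul_eq_zero.1 h.symm with h' | h'
    · exact absurd h' hcard
    · exact h' 
  funext a
  have := hc0 a
  simp only [hc, Pi.sub_apply, sub_eq_zero] at this
  exact this.symm

lemma maxpr (hsym : ∀ u v, w u v = w v u) (hdiag : ∀ u, w u u = 0)
    (hnonneg : ∀ u v, 0 ≤ w u v)
    (hconn : (SimpleGraph.fromRel (fun u v => 0 < w u v)).Connected)
    {Lp : Matrix V V ℝ} (hLp : IsMoorePenrose (lap w) Lp)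
    (v z : V) : ∀ x, Lp.mulVec (pairVec v z) x ≤ Lp.mulVec (pairVec v z) v := by
  have : Nonempty V := hconn.nonempty
  have : Finite V := Finite.of_fintype V
  set φ := Lp.mulVec (pairVec v z) with hφ
  have hLφ : (lap w).mulVec φ = pairVec v z :=
    proj_eq hsym hdiag hnonneg hconn ⟨hLp.1, hLp.2.1, hLp.2.2.1, hLp.2.2.2⟩ _ (pair_sum_zero v z)
  obtain ⟨x0, hx0⟩ := Finite.exists_max φ
  suffices h : φ v = φ x0 by intro x; rw [h]; exact hx0 x
  have step : ∀ a bb, a ≠ v → φ a = φ x0 →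
      (0 < w a bb ∨ 0 < w bb a) → φ bb = φ x0 := by
    intro a bb hav ha hw
    have hw' : 0 < w a bb := by
      rcases hw with h | h
      · exact h
      · rwa [hsym]
    have hLa : (lap w).mulVec φ a ≤ 0 := by
      rw [hLφ]
      simp only [pairVec, if_neg hav]
      split <;> norm_num
    rw [lap_mulVec hdiag] at hLa
    have hterms : ∀ b ∈ Finset.univ, (0:ℝ) ≤ w a b * (φ a - φ b) := by
      intro b _
      refine mul_nonneg (hnonneg a b) ?_
      rw [ha]
      exact sub_nonneg.2 (hx0 b)
    have hsum0 : ∑ b, w a b * (φ a - φ b) = 0 :=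
      le_antisymm hLa (Finset.sum_nonneg hterms)
    have := (Finset.sum_eq_zero_iff_of_nonneg hterms).1 hsum0 bb (Finset.mem_univ bb)
    rcases mul_eq_zero.1 this with h | h
    · exact absurd h (ne_of_gt hw')
    · rw [← ha]
      linarith [sub_eq_zero.1 h]
  obtain ⟨p⟩ := hconn.preconnected x0 v
  have key : ∀ (a bv : V) (_ : (SimpleGraph.fromRel (fun u v => 0 < w u v)).Walk a bv),
      φ a = φ x0 → φ v = φ x0 ∨ φ bv = φ x0 := by
    intro a bv p
    induction p with
    | nil => exact fun h => Or.inr h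
    | @cons a b c h q ih =>
      intro ha
      by_cases hav : a = v
      · exact Or.inl (hav ▸ ha)
      · rw [SimpleGraph.fromRel_adj] at h
        exact ih (step a b hav ha h.2)
  rcases key x0 v p rfl with h | h <;> exact h

variable {Lp : Matrix V V ℝ}

lemma cross1 (hsym : ∀ u v, w u v = w v u) (hdiag : ∀ u, w u u = 0)
    (hnonneg : ∀ u v, 0 ≤ w u v)
    (hconn : (SimpleGraph.fromRel (fun u v => 0 < w u v)).Connected)
    (hLp : IsMoorePenrose (lap w) Lp) (a v z : V) :
    pairVec a v ⬝ᵥ Lp.mulVec (pairVec v z) ≤ 0 := by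
  rw [dot_pair]
  exact sub_nonpos.2 (maxpr hsym hdiag hnonneg hconn hLp v z a)

lemma cross2 (hsym : ∀ u v, w u v = w v u) (hdiag : ∀ u, w u u = 0)
    (hnonneg : ∀ u v, 0 ≤ w u v)
    (hconn : (SimpleGraph.fromRel (fun u v => 0 < w u v)).Connected)
    (hLp : IsMoorePenrose (lap w) Lp) (a v z : V) :
    pairVec v z ⬝ᵥ Lp.mulVec (pairVec a v) ≤ 0 := by
  rw [dot_pair]
  have hneg : pairVec a v = -pairVec v a := by
    funext x; simp only [pairVec, Pi.neg_apply]; ring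
  rw [hneg, Matrix.mulVec_neg]
  simp only [Pi.neg_apply]
  have := maxpr hsym hdiag hnonneg hconn hLp v a z
  linarith

lemma R_nonneg (hsym : ∀ u v, w u v = w v u) (hdiag : ∀ u, w u u = 0)
    (hnonneg : ∀ u v, 0 ≤ w u v)
    (hconn : (SimpleGraph.fromRel (fun u v => 0 < w u v)).Connected)
    (hLp : IsMoorePenrose (lap w) Lp) (a b : V) :
    0 ≤ pairVec a b ⬝ᵥ Lp.mulVec (pairVec a b) := by
  set p := pairVec a b
  set φ := Lp.mulVec p with hφ
  have hproj : (lap w).mulVec φ = p := proj_eq hsym hdiag hnonneg hconn hLp p (pair_sum_zero a b)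
  calc (0:ℝ) ≤ φ ⬝ᵥ (lap w).mulVec φ := quad_nonneg hsym hdiag hnonneg φ
  _ = (lap w).mulVec φ ⬝ᵥ φ := dotProduct_comm _ _
  _ = p ⬝ᵥ Lp.mulVec p := by rw [hproj]

lemma triangle (hsym : ∀ u v, w u v = w v u) (hdiag : ∀ u, w u u = 0)
    (hnonneg : ∀ u v, 0 ≤ w u v)
    (hconn : (SimpleGraph.fromRel (fun u v => 0 < w u v)).Connected)
    (hLp : IsMoorePenrose (lap w) Lp) (a v z : V) :
    pairVec a z ⬝ᵥ Lp.mulVec (pairVec a z) ≤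
      pairVec a v ⬝ᵥ Lp.mulVec (pairVec a v) + pairVec v z ⬝ᵥ Lp.mulVec (pairVec v z) := by
  have hsplit : pairVec a z = pairVec a v + pairVec v z := by
    funext x; simp only [pairVec, Pi.add_apply]; ring
  rw [hsplit, Matrix.mulVec_add, dotProduct_add, add_dotProduct, add_dotProduct]
  have h1 := cross1 hsym hdiag hnonneg hconn hLp a v z
  have h2 := cross2 hsym hdiag hnonneg hconn hLp a v z
  linarith

lemma walk_sum (hsym : ∀ u v, w u v = w v u) (hdiag : ∀ u, w u u = 0)
    (hnonneg : ∀ u v, 0 ≤ w u v)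
    (hconn : (SimpleGraph.fromRel (fun u v => 0 < w u v)).Connected)
    (hLp : IsMoorePenrose (lap w) Lp) (n : ℕ) (v : ℕ → V) :
    pairVec (v 0) (v n) ⬝ᵥ Lp.mulVec (pairVec (v 0) (v n)) ≤
      ∑ i ∈ Finset.range n, pairVec (v i) (v (i+1)) ⬝ᵥ Lp.mulVec (pairVec (v i) (v (i+1))) := by
  induction n with
  | zero =>
    have : pairVec (v 0) (v 0) = 0 := by funext x; simp [pairVec]
    simp [this]
  | succ n ih =>
    rw [Finset.sum_range_succ]
    calc pairVec (v 0) (v (n+1)) ⬝ᵥ Lp.mulVec (pairVec (v 0) (v (n+1)))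
        ≤ pairVec (v 0) (v n) ⬝ᵥ Lp.mulVec (pairVec (v 0) (v n)) +
          pairVec (v n) (v (n+1)) ⬝ᵥ Lp.mulVec (pairVec (v n) (v (n+1))) :=
          triangle hsym hdiag hnonneg hconn hLp _ _ _
    _ ≤ _ := by linarith

end Aux

theorem stmt18 {V : Type*} [Fintype V] [DecidableEq V] (w : V → V → ℝ)
    (hsym : ∀ u v, w u v = w v u) (hdiag : ∀ u, w u u = 0)
    (hnonneg : ∀ u v, 0 ≤ w u v)
    (hconn : (SimpleGraph.fromRel (fun u v => 0 < w u v)).Connected)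
    (Lp : Matrix V V ℝ) (hLp : IsMoorePenrose (lap w) Lp)
    (α : ℝ) (l : ℕ) (hl : 0 < l)
    -- a walk `u 0, u 1, …, u l` whose `i`-th multi-edge has weight `we i`
    (u : Fin (l + 1) → V) (we : Fin l → ℝ) (hwe : ∀ i, 0 < we i)
    (hends : u 0 ≠ u (Fin.last l))
    -- every multi-edge of the walk is `α`-bounded w.r.t. `L`
    (hbound : ∀ i : Fin l, we i *
      (pairVec (u i.castSucc) (u i.succ) ⬝ᵥ Lp.mulVec (pairVec (u i.castSucc) (u i.succ))) ≤ α) :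
    (1 / ∑ i, 1 / we i) *
      (pairVec (u 0) (u (Fin.last l)) ⬝ᵥ Lp.mulVec (pairVec (u 0) (u (Fin.last l)))) ≤ α := by
  set v : ℕ → V := fun i => u ⟨min i l, Nat.lt_succ_of_le (Nat.min_le_right i l)⟩ with hv
  have hv0 : v 0 = u 0 := by
    simp only [hv]
    congr 1
  have hvl : v l = u (Fin.last l) := by
    simp only [hv]
    congr 1
    exact Fin.ext (by simp [Fin.last])
  have hwalk := walk_sum hsym hdiag hnonneg hconn hLp l v
  rw [hv0, hvl] at hwalk
  have hsum_eq : (∑ i ∈ Finset.range l,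
        pairVec (v i) (v (i+1)) ⬝ᵥ Lp.mulVec (pairVec (v i) (v (i+1))))
      = ∑ i : Fin l,
        pairVec (u i.castSucc) (u i.succ) ⬝ᵥ Lp.mulVec (pairVec (u i.castSucc) (u i.succ)) := by
    rw [← Fin.sum_univ_eq_sum_range
      (fun i => pairVec (v i) (v (i+1)) ⬝ᵥ Lp.mulVec (pairVec (v i) (v (i+1)))) l]
    refine Finset.sum_congr rfl fun i _ => ?_
    have h1 : v i.val = u i.castSucc := by
      simp only [hv]
      congr 1
      exact Fin.ext (by simp [Nat.min_eq_left (le_of_lt i.isLt)])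
    have h2 : v (i.val+1) = u i.succ := by
      simp only [hv]
      congr 1
      exact Fin.ext (by simp [Nat.min_eq_left (Nat.succ_le_of_lt i.isLt)])
    rw [h1, h2]
  rw [hsum_eq] at hwalk
  have hbd : ∀ i : Fin l,
      pairVec (u i.castSucc) (u i.succ) ⬝ᵥ Lp.mulVec (pairVec (u i.castSucc) (u i.succ))
        ≤ α * (1 / we i) := by
    intro i
    rw [mul_one_div, le_div_iff₀ (hwe i), mul_comm]
    exact hbound i
  have hS : 0 < ∑ i, 1 / we i :=
    Finset.sum_pos (fun i _ => one_div_pos.2 (hwe i)) ⟨⟨0, hl⟩, Finset.mem_univ _⟩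
  have htot : pairVec (u 0) (u (Fin.last l)) ⬝ᵥ Lp.mulVec (pairVec (u 0) (u (Fin.last l)))
      ≤ α * ∑ i, 1 / we i := by
    calc pairVec (u 0) (u (Fin.last l)) ⬝ᵥ Lp.mulVec (pairVec (u 0) (u (Fin.last l)))
        ≤ ∑ i : Fin l, pairVec (u i.castSucc) (u i.succ) ⬝ᵥ
            Lp.mulVec (pairVec (u i.castSucc) (u i.succ)) := hwalk
    _ ≤ ∑ i, α * (1 / we i) := Finset.sum_le_sum fun i _ => hbd i
    _ = α * ∑ i, 1 / we i := by rw [Finset.mul_sum]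
  rw [one_div, ← div_eq_inv_mul]
  exact (div_le_iff₀ hS).2 htot
end

section
/- For a Laplacian L of a connected multi-graph and nonempty proper subset C ⊆ V with F = V \ C, write L_{FF} = D - A with D diagonal and A nonnegative with zero diagonal. Then Sc(L, C) = L_{CC} - Σ_{k=0}^{∞} L_{CF}(D^{-1}A)^k D^{-1} L_{FC}, where the series converges; equivalently, for distinct s, t ∈ C, the (s,t)-entry of -Sc(L,C) equals the sum over all C-terminal walks W = (u₀, e₁, …, e_l, u_l) from s to t of (∏_{i=1}^{l} w(e_i)) / (∏_{i=1}^{l-1} w(u_i)), where w(u) = Σ_{e ∋ u} w(e). -/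
open Matrix BigOperators

/-- The total weight of the `C`-terminal walks from `s` to `t` having exactly `j` interior
vertices (all in `F`): each walk `W = (s, u₁, …, u_j, t)` contributes
`(∏ edge weights) / (∏ interior weighted degrees)`. -/
noncomputable def walkSum {Fv Cv : Type*} [Fintype Fv] [Fintype Cv]
    (w : (Fv ⊕ Cv) → (Fv ⊕ Cv) → ℝ) (s t : Cv) : ℕ → ℝ
  | 0 => w (Sum.inr s) (Sum.inr t)
  | (j + 1) => ∑ p : Fin (j + 1) → Fv,
      (w (Sum.inr s) (Sum.inl (p 0)) *
        (∏ i : Fin j, w (Sum.inl (p i.castSucc)) (Sum.inl (p i.succ))) *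
        w (Sum.inl (p (Fin.last j))) (Sum.inr t)) /
      (∏ i, ∑ x, w (Sum.inl (p i)) x)

/-! ### Auxiliary material -/

section Geom

/-- Geometric (Neumann) series for a real symmetric matrix whose spectrum
lies in `(-1, 1)`, expressed via positive-definiteness of `1 - N` and `1 + N`. -/
lemma hasSum_geom_herm {n : Type*} [Fintype n] [DecidableEq n]
    {N : Matrix n n ℝ} (hH : N.IsHermitian)
    (h1 : (1 - N).PosDef) (h2 : (1 + N).PosDef) :
    HasSum (fun k : ℕ => N ^ k) (1 - N)⁻¹ := by
  set U : Matrix n n ℝ := (hH.eigenvectorUnitary : Matrix n n ℝ) with hUdef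
  set μ : n → ℝ := hH.eigenvalues with hμdef
  have hU : U * star U = 1 := mem_unitaryGroup_iff.mp hH.eigenvectorUnitary.2
  have hU' : star U * U = 1 := mem_unitaryGroup_iff'.mp hH.eigenvectorUnitary.2
  have spec : N = U * diagonal μ * star U := by
    have := hH.spectral_theorem
    simpa using this
  -- eigenvalue bounds
  have hbound : ∀ i, |μ i| < 1 := by
    intro i
    set v : n → ℝ := ⇑(hH.eigenvectorBasis i) with hv
    have hvne : v ≠ 0 := by
      intro h
      apply hH.eigenvectorBasis.orthonormal.ne_zero i
      ext j
      exact congrFun h j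
    have hvv : 0 < v ⬝ᵥ v := by
      have := dotProduct_star_self_pos_iff (v := v) |>.mpr hvne
      simpa using this
    have hNv : N *ᵥ v = μ i • v := hH.mulVec_eigenvectorBasis i
    have e1 : star v ⬝ᵥ ((1 - N) *ᵥ v) = (1 - μ i) * (v ⬝ᵥ v) := by
      rw [sub_mulVec, one_mulVec, hNv]
      simp [dotProduct_sub, dotProduct_smul, sub_mul]
    have e2 : star v ⬝ᵥ ((1 + N) *ᵥ v) = (1 + μ i) * (v ⬝ᵥ v) := by
      rw [add_mulVec, one_mulVec, hNv]
      simp [dotProduct_add, dotProduct_smul, add_mul]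
    have p1 := h1.dotProduct_mulVec_pos hvne
    have p2 := h2.dotProduct_mulVec_pos hvne
    rw [e1] at p1
    rw [e2] at p2
    have b1 : 0 < 1 - μ i := by
      rcases mul_pos_iff.mp p1 with ⟨h, _⟩ | ⟨_, h⟩
      · exact h
      · linarith
    have b2 : 0 < 1 + μ i := by
      rcases mul_pos_iff.mp p2 with ⟨h, _⟩ | ⟨_, h⟩
      · exact h
      · linarith
    rw [abs_lt]; constructor <;> linarith
  have powEq : ∀ k : ℕ, N ^ k = U * diagonal (fun i => μ i ^ k) * star U := by
    intro k
    induction k with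
    | zero => simp [hU]
    | succ k ih =>
      rw [pow_succ, ih, spec]
      have : U * diagonal (fun i => μ i ^ k) * star U * (U * diagonal μ * star U)
          = U * (diagonal (fun i => μ i ^ k) * (star U * U) * diagonal μ) * star U := by
        noncomm_ring
      rw [this, hU', mul_one, diagonal_mul_diagonal]
      simp [pow_succ]
  set S : Matrix n n ℝ := U * diagonal (fun i => (1 - μ i)⁻¹) * star U with hS
  have hdiagsum : HasSum (fun k : ℕ => diagonal (fun i => μ i ^ k))
      (diagonal (fun i => (1 - μ i)⁻¹) : Matrix n n ℝ) := by
    refine Pi.hasSum.mpr fun i => Pi.hasSum.mpr fun j => ?_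
    by_cases hij : i = j
    · subst hij
      simp only [diagonal_apply_eq]
      exact hasSum_geometric_of_norm_lt_one (by simpa using hbound i)
    · simp only [diagonal_apply_ne _ hij]
      exact hasSum_zero
  have hmap : HasSum (fun k : ℕ => U * diagonal (fun i => μ i ^ k) * star U) S := by
    let L : Matrix n n ℝ →ₗ[ℝ] Matrix n n ℝ :=
      (LinearMap.mulLeft ℝ U).comp (LinearMap.mulRight ℝ (star U))
    have hL : Continuous L := LinearMap.continuous_of_finiteDimensional L
    have key := hdiagsum.map L.toAddMonoidHom hL
    have e1 : (⇑L.toAddMonoidHom ∘ fun k : ℕ => diagonal fun i => μ i ^ k)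
        = fun k : ℕ => U * diagonal (fun i => μ i ^ k) * star U := by
      funext k; simp [L, mul_assoc]
    have e2 : L.toAddMonoidHom (diagonal fun i => (1 - μ i)⁻¹) = S := by
      simp [L, hS, mul_assoc]
    rw [e1, e2] at key; exact key
  have hinv : (1 - N)⁻¹ = S := by
    apply inv_eq_right_inv
    have h1N : 1 - N = U * diagonal (fun i => 1 - μ i) * star U := by
      conv_lhs => rw [spec, show (1 : Matrix n n ℝ) = U * diagonal (fun _ => (1:ℝ)) * star U by
        simp [hU]]
      rw [← sub_mul, ← mul_sub, diagonal_sub]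
    rw [h1N, hS]
    have : U * diagonal (fun i => 1 - μ i) * star U * (U * diagonal (fun i => (1 - μ i)⁻¹) * star U)
        = U * (diagonal (fun i => 1 - μ i) * (star U * U) * diagonal (fun i => (1 - μ i)⁻¹)) * star U := by
      noncomm_ring
    rw [this, hU', mul_one, diagonal_mul_diagonal]
    have : (fun i => (1 - μ i) * (1 - μ i)⁻¹) = fun _ => (1:ℝ) := by
      funext i
      have : 1 - μ i ≠ 0 := by
        have := hbound i; rw [abs_lt] at this; linarith
      field_simp
    rw [this, diagonal_one, mul_one, hU]
  rw [hinv]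
  have : (fun k : ℕ => N ^ k) = fun k => U * diagonal (fun i => μ i ^ k) * star U :=
    funext powEq
  rw [this]
  exact hmap

end Geom

section QF
variable {V : Type*} [Fintype V] [DecidableEq V]
set_option linter.unusedSectionVars false

lemma qf_expand (M : Matrix V V ℝ) (x y : V → ℝ) :
    x ⬝ᵥ (M *ᵥ y) = ∑ u, ∑ v, x u * M u v * y v := by
  simp [dotProduct, mulVec, Finset.mul_sum, mul_assoc]

lemma full_qf (w : V → V → ℝ) (hsym : ∀ u v, w u v = w v u) (y : V → ℝ) :
    y ⬝ᵥ ((diagonal (fun u => ∑ x, w u x) - Matrix.of w) *ᵥ y)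
      = (1/2) * ∑ u, ∑ v, w u v * (y u - y v)^2 := by
  rw [qf_expand]
  set A1 := ∑ u, ∑ v, w u v * y u ^ 2 with hA1
  set A2 := ∑ u, ∑ v, w u v * y v ^ 2 with hA2
  set A3 := ∑ u, ∑ v, w u v * (y u * y v) with hA3
  have swap : A2 = A1 := by
    rw [hA1, hA2, Finset.sum_comm]
    exact Finset.sum_congr rfl fun u _ => Finset.sum_congr rfl fun v _ => by rw [hsym]
  have e1 : ∑ u, ∑ v, y u * ((diagonal (fun u => ∑ x, w u x) - Matrix.of w) u v) * y v
      = A1 - A3 := by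
    rw [hA1, hA3, ← Finset.sum_sub_distrib]
    refine Finset.sum_congr rfl fun u _ => ?_
    have : ∀ v, y u * ((diagonal (fun u => ∑ x, w u x) - Matrix.of w) u v) * y v
        = (if u = v then (∑ x, w u x) * y u ^ 2 else 0) - w u v * (y u * y v) := by
      intro v
      by_cases h : u = v
      · subst h; simp [diagonal, Matrix.sub_apply]; ring
      · simp [diagonal, Matrix.sub_apply, h]; ring
    simp_rw [this, Finset.sum_sub_distrib, Finset.sum_ite_eq, Finset.mem_univ, if_true,
      Finset.sum_mul]
  have e2 : ∑ u, ∑ v, w u v * (y u - y v)^2 = A1 + A2 - 2 * A3 := by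
    rw [hA1, hA2, hA3, Finset.mul_sum, ← Finset.sum_add_distrib, ← Finset.sum_sub_distrib]
    refine Finset.sum_congr rfl fun u _ => ?_
    rw [Finset.mul_sum, ← Finset.sum_add_distrib, ← Finset.sum_sub_distrib]
    exact Finset.sum_congr rfl fun v _ => by ring
  rw [e1, e2, swap]; ring

lemma const_on_conn {G : SimpleGraph V} (h : G.Preconnected) (y : V → ℝ)
    (he : ∀ u v, G.Adj u v → y u = y v) (u v : V) : y u = y v := by
  obtain ⟨p⟩ := h u v
  induction p with
  | nil => rfl
  | cons h' _ ih => exact (he _ _ h').trans ih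

lemma posdef_conj_diag {M : Matrix V V ℝ} (hM : M.PosDef) {e : V → ℝ}
    (he : ∀ i, e i ≠ 0) : (diagonal e * M * diagonal e).PosDef := by
  rw [posDef_iff_dotProduct_mulVec]
  constructor
  · have : (diagonal e * M * diagonal e)ᴴ = diagonal e * M * diagonal e := by
      rw [conjTranspose_mul, conjTranspose_mul, hM.1.eq, (isHermitian_diagonal e).eq,
        mul_assoc]
    exact this
  · intro x hx
    have hx' : (fun i => e i * x i) ≠ 0 := by
      intro h
      apply hx
      funext i
      have := congrFun h i
      simpa using (mul_eq_zero.mp this).resolve_left (he i)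
    have hpos := hM.dotProduct_mulVec_pos hx'
    rw [star_trivial] at hpos ⊢
    rw [qf_expand] at hpos ⊢
    have : ∀ u v : V, x u * (diagonal e * M * diagonal e) u v * x v
        = (e u * x u) * M u v * (e v * x v) := by
      intro u v
      rw [Matrix.mul_diagonal, Matrix.diagonal_mul]
      ring
    simp_rw [this]
    exact hpos

end QF

section Pos
set_option linter.unusedSectionVars false
variable {Fv Cv : Type*} [Fintype Fv] [Fintype Cv] [DecidableEq Fv] [DecidableEq Cv]
  [Nonempty Cv]
variable (w : (Fv ⊕ Cv) → (Fv ⊕ Cv) → ℝ)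

lemma degpos (hsym : ∀ u v, w u v = w v u) (hnonneg : ∀ u v, 0 ≤ w u v)
    (hconn : (SimpleGraph.fromRel (fun u v => 0 < w u v)).Connected) (i : Fv) :
    0 < ∑ x, w (Sum.inl i) x := by
  obtain ⟨p⟩ := hconn.preconnected (Sum.inl i) (Sum.inr (Classical.arbitrary Cv))
  cases p with
  | cons h' p' =>
    rename_i u
    rw [SimpleGraph.fromRel_adj] at h'
    obtain ⟨-, hw⟩ := h'
    have hw' : 0 < w (Sum.inl i) u := by
      rcases hw with h'' | h''
      · exact h''
      · rw [hsym]; exact h''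
    exact Finset.sum_pos' (fun x _ => hnonneg _ _) ⟨u, Finset.mem_univ u, hw'⟩

lemma restrict_qf (x : Fv → ℝ) :
    x ⬝ᵥ ((diagonal (fun i : Fv => ∑ v, w (Sum.inl i) v)
        - Matrix.of (fun i j : Fv => w (Sum.inl i) (Sum.inl j))) *ᵥ x)
      = (Sum.elim x 0) ⬝ᵥ ((diagonal (fun u : Fv ⊕ Cv => ∑ v, w u v) - Matrix.of w) *ᵥ
          (Sum.elim x 0)) := by
  rw [qf_expand, qf_expand]
  rw [Fintype.sum_sum_type]
  simp only [Sum.elim_inl, Sum.elim_inr, Pi.zero_apply, zero_mul, mul_zero,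
    Finset.sum_const_zero, add_zero]
  refine Finset.sum_congr rfl fun i _ => ?_
  rw [Fintype.sum_sum_type]
  simp only [Sum.elim_inl, Sum.elim_inr, Pi.zero_apply, zero_mul, mul_zero,
    Finset.sum_const_zero, add_zero]
  refine Finset.sum_congr rfl fun j _ => ?_
  by_cases h : i = j
  · subst h; simp [Matrix.sub_apply, diagonal_apply_eq]
  · simp [Matrix.sub_apply, diagonal_apply_ne, h, Sum.inl.injEq]

lemma posdef_sub (hsym : ∀ u v, w u v = w v u) (hdiag : ∀ u, w u u = 0)
    (hnonneg : ∀ u v, 0 ≤ w u v)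
    (hconn : (SimpleGraph.fromRel (fun u v => 0 < w u v)).Connected) :
    (diagonal (fun i : Fv => ∑ v, w (Sum.inl i) v)
      - Matrix.of (fun i j : Fv => w (Sum.inl i) (Sum.inl j))).PosDef := by
  rw [posDef_iff_dotProduct_mulVec]
  constructor
  · refine (isHermitian_diagonal _).sub ?_
    ext i j
    simp only [conjTranspose_apply, of_apply, star_trivial]
    exact hsym _ _
  · intro x hx
    have hqf := restrict_qf w x
    rw [star_trivial, hqf, full_qf w hsym]
    have hle : 0 ≤ ∑ u, ∑ v, w u v * (Sum.elim x 0 u - Sum.elim x 0 v)^2 :=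
      Finset.sum_nonneg fun u _ => Finset.sum_nonneg fun v _ =>
        mul_nonneg (hnonneg u v) (sq_nonneg _)
    rcases hle.lt_or_eq with h | h
    · linarith
    · exfalso
      have hz : ∀ u ∈ Finset.univ, ∀ v ∈ Finset.univ,
          w u v * (Sum.elim x 0 u - Sum.elim x 0 v)^2 = 0 := by
        have h' := (Finset.sum_eq_zero_iff_of_nonneg (fun u _ => Finset.sum_nonneg fun v _ =>
          mul_nonneg (hnonneg u v) (sq_nonneg _))).mp h.symm
        intro u hu v hv
        exact (Finset.sum_eq_zero_iff_of_nonneg (fun v _ =>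
          mul_nonneg (hnonneg u v) (sq_nonneg _))).mp (h' u hu) v hv
      have he : ∀ u v, (SimpleGraph.fromRel (fun u v => 0 < w u v)).Adj u v →
          Sum.elim x 0 u = Sum.elim x 0 v := by
        intro u v huv
        rw [SimpleGraph.fromRel_adj] at huv
        obtain ⟨-, hw⟩ := huv
        have hw' : 0 < w u v := by
          rcases hw with h'' | h''
          · exact h''
          · rw [hsym]; exact h''
        have := hz u (Finset.mem_univ u) v (Finset.mem_univ v)
        have h2 : (Sum.elim x 0 u - Sum.elim x 0 v)^2 = 0 := by
          rcases mul_eq_zero.mp this with h3 | h3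
          · exact absurd h3 hw'.ne'
          · exact h3
        have := pow_eq_zero_iff (n := 2) (by norm_num) |>.mp h2
        linarith [this]
      have hconst := const_on_conn hconn.preconnected (Sum.elim x 0) he
      apply hx
      funext i
      have := hconst (Sum.inl i) (Sum.inr (Classical.arbitrary Cv))
      simpa using this

lemma posdef_add (hsym : ∀ u v, w u v = w v u) (hdiag : ∀ u, w u u = 0)
    (hnonneg : ∀ u v, 0 ≤ w u v)
    (hconn : (SimpleGraph.fromRel (fun u v => 0 < w u v)).Connected) :
    (diagonal (fun i : Fv => ∑ v, w (Sum.inl i) v)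
      + Matrix.of (fun i j : Fv => w (Sum.inl i) (Sum.inl j))).PosDef := by
  rw [posDef_iff_dotProduct_mulVec]
  constructor
  · refine (isHermitian_diagonal _).add ?_
    ext i j
    simp only [conjTranspose_apply, of_apply, star_trivial]
    exact hsym _ _
  · intro x hx
    set z : Fv → ℝ := fun i => |x i| with hzdef
    have hzne : z ≠ 0 := by
      intro h
      apply hx
      funext i
      have := congrFun h i
      simpa [hzdef] using this
    have h1 := (posdef_sub w hsym hdiag hnonneg hconn).dotProduct_mulVec_pos hzne
    rw [star_trivial] at h1 ⊢
    refine lt_of_lt_of_le h1 ?_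
    rw [qf_expand, qf_expand]
    refine Finset.sum_le_sum fun u _ => Finset.sum_le_sum fun v _ => ?_
    by_cases h : u = v
    · subst h
      simp only [Matrix.sub_apply, Matrix.add_apply, diagonal_apply_eq, of_apply, hdiag,
        sub_zero, add_zero, hzdef]
      have key : |x u| * (∑ v, w (Sum.inl u) v) * |x u|
          = x u * (∑ v, w (Sum.inl u) v) * x u := by
        rw [mul_comm (|x u|) (∑ v, w (Sum.inl u) v), mul_assoc, abs_mul_abs_self]; ring
      exact le_of_eq key
    · simp only [Matrix.sub_apply, Matrix.add_apply, diagonal_apply_ne _ h, of_apply,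
        zero_sub, zero_add, hzdef]
      have h1 := hnonneg (Sum.inl u) (Sum.inl v)
      have h2 := neg_abs_le (x u * x v)
      have h3 := abs_mul (x u) (x v)
      nlinarith [abs_nonneg (x u), abs_nonneg (x v)]

end Pos

section Walks

noncomputable def gsum {Fv Cv : Type*} [Fintype Fv] [Fintype Cv]
    (w : (Fv ⊕ Cv) → (Fv ⊕ Cv) → ℝ) (t : Cv) : ℕ → (Fv ⊕ Cv) → ℝ
  | 0, a => w a (Sum.inr t)
  | (j + 1), a => ∑ p : Fin (j + 1) → Fv,
      (w a (Sum.inl (p 0)) *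
        (∏ i : Fin j, w (Sum.inl (p i.castSucc)) (Sum.inl (p i.succ))) *
        w (Sum.inl (p (Fin.last j))) (Sum.inr t)) /
      (∏ i, ∑ x, w (Sum.inl (p i)) x)

variable {Fv Cv : Type*} [Fintype Fv] [Fintype Cv]
  (w : (Fv ⊕ Cv) → (Fv ⊕ Cv) → ℝ) (s t : Cv)

lemma walkSum_eq_gsum (n : ℕ) : walkSum w s t n = gsum w t n (Sum.inr s) := by
  cases n <;> rfl

lemma gsum_succ (k : ℕ) (a : Fv ⊕ Cv) :
    gsum w t (k + 1) a
      = ∑ b : Fv, w a (Sum.inl b) * (∑ x, w (Sum.inl b) x)⁻¹ * gsum w t k (Sum.inl b) := by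
  cases k with
  | zero =>
    rw [show (0:ℕ) + 1 = 1 from rfl]
    rw [gsum]
    rw [← (Equiv.funUnique (Fin 1) Fv).symm.sum_comp]
    refine Finset.sum_congr rfl fun b _ => ?_
    simp [gsum, Equiv.funUnique, div_eq_mul_inv]
    ring
  | succ m =>
    rw [gsum]
    rw [← ((Fin.consEquiv (fun _ : Fin (m + 2) => Fv)).sum_comp
      (fun p => (w a (Sum.inl (p 0)) *
        (∏ i : Fin (m + 1), w (Sum.inl (p i.castSucc)) (Sum.inl (p i.succ))) *
        w (Sum.inl (p (Fin.last (m + 1)))) (Sum.inr t)) /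
      (∏ i, ∑ x, w (Sum.inl (p i)) x)))]
    rw [Fintype.sum_prod_type]
    refine Finset.sum_congr rfl fun b _ => ?_
    rw [gsum, Finset.mul_sum]
    refine Finset.sum_congr rfl fun q _ => ?_
    simp only [Fin.consEquiv_apply]
    have hcons : ∀ i : Fin (m + 1), (Fin.cons b q : Fin (m+2) → Fv) i.succ
        = q i := fun i => Fin.cons_succ (α := fun _ : Fin (m+2) => Fv) b q i
    have h0 : (Fin.cons b q : Fin (m+2) → Fv) 0 = b := rfl
    have hprod : (∏ i : Fin (m + 1),
        w (Sum.inl ((Fin.cons b q : Fin (m+2) → Fv) i.castSucc))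
          (Sum.inl ((Fin.cons b q : Fin (m+2) → Fv) i.succ)))
        = w (Sum.inl b) (Sum.inl (q 0)) *
          ∏ i : Fin m, w (Sum.inl (q i.castSucc)) (Sum.inl (q i.succ)) := by
      rw [Fin.prod_univ_succ]
      simp only [← Fin.succ_castSucc, Fin.cons_succ, Fin.cons_zero, Fin.castSucc_zero]
    have hlast : (Fin.cons b q : Fin (m+2) → Fv) (Fin.last (m + 1))
        = q (Fin.last m) := by
      rw [← Fin.succ_last, hcons]
    have hdeg : (∏ i : Fin (m + 2), ∑ x, w (Sum.inl ((Fin.cons b q : Fin (m+2) → Fv) i)) x)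
        = (∑ x, w (Sum.inl b) x) * ∏ i : Fin (m + 1), ∑ x, w (Sum.inl (q i)) x := by
      rw [Fin.prod_univ_succ]
      simp only [Fin.cons_succ, Fin.cons_zero]
    rw [hprod, hlast, hdeg, h0]
    rw [div_eq_mul_inv, div_eq_mul_inv, mul_inv]
    ring

end Walks

theorem stmt19 {Fv Cv : Type*} [Fintype Fv] [Fintype Cv] [DecidableEq Fv] [DecidableEq Cv]
    [Nonempty Fv] [Nonempty Cv]
    (w : (Fv ⊕ Cv) → (Fv ⊕ Cv) → ℝ)
    (hsym : ∀ u v, w u v = w v u) (hdiag : ∀ u, w u u = 0)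
    (hnonneg : ∀ u v, 0 ≤ w u v)
    (hconn : (SimpleGraph.fromRel (fun u v => 0 < w u v)).Connected)
    (D A : Matrix Fv Fv ℝ)
    (hD : D = Matrix.diagonal (fun i => ∑ x, w (Sum.inl i) x))
    (hA : A = fun i j => w (Sum.inl i) (Sum.inl j)) :
    -- the Neumann series for `L_FF⁻¹` converges, giving
    -- `Sc(L,C) = L_CC - Σ_{k≥0} L_CF (D⁻¹A)^k D⁻¹ L_FC` …
    HasSum (fun k : ℕ => (lap w).toBlocks₂₁ * (D⁻¹ * A) ^ k * D⁻¹ * (lap w).toBlocks₁₂)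
      ((lap w).toBlocks₂₁ * ((lap w).toBlocks₁₁)⁻¹ * (lap w).toBlocks₁₂) ∧
    -- … and, entrywise, `-Sc(L,C)_{s,t}` is the weighted sum over all `C`-terminal walks
    ∀ s t : Cv, s ≠ t →
      -((lap w).toBlocks₂₂ -
          (lap w).toBlocks₂₁ * ((lap w).toBlocks₁₁)⁻¹ * (lap w).toBlocks₁₂) s t =
        ∑' j : ℕ, walkSum w s t j := by
  subst hD hA
  set dg : Fv → ℝ := fun i => ∑ x, w (Sum.inl i) x with hdg
  set AF : Matrix Fv Fv ℝ := Matrix.of (fun i j : Fv => w (Sum.inl i) (Sum.inl j)) with hAF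
  have hd : ∀ i, 0 < dg i := degpos w hsym hnonneg hconn
  -- the FF block of the Laplacian
  have hL11 : (lap w).toBlocks₁₁ = diagonal dg - AF := by
    ext i j
    by_cases h : i = j
    · subst h
      simp [Matrix.toBlocks₁₁, lap, hdiag, Matrix.sub_apply, hdg, hAF]
    · have : (Sum.inl i : Fv ⊕ Cv) ≠ Sum.inl j := by simp [h]
      simp only [Matrix.toBlocks₁₁, lap, of_apply, Matrix.sub_apply, diagonal_apply_ne _ h, hAF]
      rw [if_neg this]
      ring
  have hL21 : ∀ (a : Cv) (i : Fv), (lap w).toBlocks₂₁ a i = -w (Sum.inr a) (Sum.inl i) := by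
    intro a i
    simp [Matrix.toBlocks₂₁, lap]
  have hL12 : ∀ (i : Fv) (a : Cv), (lap w).toBlocks₁₂ i a = -w (Sum.inl i) (Sum.inr a) := by
    intro i a
    simp [Matrix.toBlocks₁₂, lap]
  -- square roots of the degrees
  set sd : Fv → ℝ := fun i => Real.sqrt (dg i) with hsd'
  have hsd : ∀ i, 0 < sd i := fun i => Real.sqrt_pos.mpr (hd i)
  have hsdsq : ∀ i, sd i * sd i = dg i := fun i => Real.mul_self_sqrt (hd i).le
  set Dh : Matrix Fv Fv ℝ := diagonal sd with hDh'
  set Dhi : Matrix Fv Fv ℝ := diagonal (fun i => (sd i)⁻¹) with hDhi'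
  have hDh1 : Dh * Dhi = 1 := by
    rw [hDh', hDhi', diagonal_mul_diagonal,
      show (fun i => sd i * (sd i)⁻¹) = fun _ => (1:ℝ) from
        funext fun i => mul_inv_cancel₀ (hsd i).ne', diagonal_one]
  have hDh2 : Dhi * Dh = 1 := by
    rw [hDh', hDhi', diagonal_mul_diagonal,
      show (fun i => (sd i)⁻¹ * sd i) = fun _ => (1:ℝ) from
        funext fun i => inv_mul_cancel₀ (hsd i).ne', diagonal_one]
  have hDinv : (diagonal dg)⁻¹ = diagonal (fun i => (dg i)⁻¹) := by
    apply inv_eq_right_inv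
    rw [diagonal_mul_diagonal,
      show (fun i => dg i * (dg i)⁻¹) = fun _ => (1:ℝ) from
        funext fun i => mul_inv_cancel₀ (hd i).ne', diagonal_one]
  have hDhinv2 : Dhi * Dhi = (diagonal dg)⁻¹ := by
    have : (fun i => (sd i)⁻¹ * (sd i)⁻¹) = fun i => (dg i)⁻¹ :=
      funext fun i => by rw [← mul_inv, hsdsq]
    rw [hDinv, hDhi', diagonal_mul_diagonal, this]
  -- the symmetrized matrix
  set N : Matrix Fv Fv ℝ := Dhi * AF * Dhi with hN'
  have hNH : N.IsHermitian := by
    have : Nᴴ = N := by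
      rw [hN', conjTranspose_mul, conjTranspose_mul,
        (isHermitian_diagonal (fun i => (sd i)⁻¹)).eq]
      have : AFᴴ = AF := by
        ext i j
        simp only [conjTranspose_apply, hAF, of_apply, star_trivial]
        exact hsym _ _
      rw [show (diagonal fun i => (sd i)⁻¹) = Dhi from rfl, this, mul_assoc]
    exact this
  have hconj1 : Dhi * diagonal dg * Dhi = 1 := by
    rw [hDhi', diagonal_mul_diagonal, diagonal_mul_diagonal,
      show (fun i => (sd i)⁻¹ * dg i * (sd i)⁻¹) = fun _ => (1:ℝ) from funext fun i => by
        rw [← hsdsq i]; field_simp; exact div_self (hsd i).ne', diagonal_one]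
  have h1subN : 1 - N = Dhi * (diagonal dg - AF) * Dhi := by
    rw [mul_sub, sub_mul, ← hconj1, hN']
  have h1addN : 1 + N = Dhi * (diagonal dg + AF) * Dhi := by
    rw [mul_add, add_mul, ← hconj1, hN']
  have hP1 : (1 - N).PosDef := by
    rw [h1subN, hDhi']
    exact posdef_conj_diag (posdef_sub w hsym hdiag hnonneg hconn)
      (fun i => inv_ne_zero (hsd i).ne')
  have hP2 : (1 + N).PosDef := by
    rw [h1addN, hDhi']
    exact posdef_conj_diag (posdef_add w hsym hdiag hnonneg hconn)
      (fun i => inv_ne_zero (hsd i).ne')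
  have core : HasSum (fun k : ℕ => N ^ k) (1 - N)⁻¹ := hasSum_geom_herm hNH hP1 hP2
  -- cancellation helpers
  have cDhDhi : ∀ X : Matrix Fv Fv ℝ, Dh * (Dhi * X) = X := fun X => by
    rw [← mul_assoc, hDh1, one_mul]
  have cDhiDh : ∀ X : Matrix Fv Fv ℝ, Dhi * (Dh * X) = X := fun X => by
    rw [← mul_assoc, hDh2, one_mul]
  have hinvN : (1 - N) * (1 - N)⁻¹ = 1 :=
    Matrix.mul_nonsing_inv _ (isUnit_iff_ne_zero.mpr hP1.det_pos.ne')
  have cN : ∀ X : Matrix Fv Fv ℝ, (1 - N) * ((1 - N)⁻¹ * X) = X := fun X => by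
    rw [← mul_assoc, hinvN, one_mul]
  -- X = D⁻¹ A in terms of N
  have hX : (diagonal dg)⁻¹ * AF = Dhi * N * Dh := by
    rw [hN', ← hDhinv2]
    simp only [Matrix.mul_assoc]
    rw [hDh2, Matrix.mul_one]
  have hMpow : ∀ k : ℕ, ((diagonal dg)⁻¹ * AF) ^ k = Dhi * N ^ k * Dh := by
    intro k
    induction k with
    | zero => simp [hDh2]
    | succ k ih =>
      rw [pow_succ, ih, hX, pow_succ]
      simp only [Matrix.mul_assoc, cDhDhi]
  -- inverse of the FF block
  have hsubfac : diagonal dg - AF = Dh * (1 - N) * Dh := by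
    rw [h1subN]
    have : Dh * (Dhi * (diagonal dg - AF) * Dhi) * Dh
        = (Dh * Dhi) * (diagonal dg - AF) * (Dhi * Dh) := by noncomm_ring
    rw [this, hDh1, hDh2, one_mul, mul_one]
  have hL11inv : ((lap w).toBlocks₁₁)⁻¹ = Dhi * (1 - N)⁻¹ * Dhi := by
    apply inv_eq_right_inv
    rw [hL11, hsubfac]
    simp only [Matrix.mul_assoc, cDhDhi, cN]
    exact hDh1
  -- the Neumann series statement
  have hterm : ∀ k : ℕ, (lap w).toBlocks₂₁ * ((diagonal dg)⁻¹ * AF) ^ k *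
        (diagonal dg)⁻¹ * (lap w).toBlocks₁₂
      = ((lap w).toBlocks₂₁ * Dhi) * N ^ k * (Dhi * (lap w).toBlocks₁₂) := by
    intro k
    rw [hMpow, ← hDhinv2]
    simp only [Matrix.mul_assoc, cDhDhi]
  have hval : (lap w).toBlocks₂₁ * ((lap w).toBlocks₁₁)⁻¹ * (lap w).toBlocks₁₂
      = ((lap w).toBlocks₂₁ * Dhi) * (1 - N)⁻¹ * (Dhi * (lap w).toBlocks₁₂) := by
    rw [hL11inv]
    simp only [Matrix.mul_assoc]
  have hmain : HasSum (fun k : ℕ => (lap w).toBlocks₂₁ * ((diagonal dg)⁻¹ * AF) ^ k *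
        (diagonal dg)⁻¹ * (lap w).toBlocks₁₂)
      ((lap w).toBlocks₂₁ * ((lap w).toBlocks₁₁)⁻¹ * (lap w).toBlocks₁₂) := by
    let L : Matrix Fv Fv ℝ →ₗ[ℝ] Matrix Cv Cv ℝ :=
      { toFun := fun X => ((lap w).toBlocks₂₁ * Dhi) * X * (Dhi * (lap w).toBlocks₁₂)
        map_add' := fun X Y => by
          simp only [Matrix.mul_add, Matrix.add_mul]
        map_smul' := fun c X => by
          simp only [RingHom.id_apply, Matrix.mul_smul, Matrix.smul_mul] }
    have hLc : Continuous L := LinearMap.continuous_of_finiteDimensional L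
    have key := core.map L.toAddMonoidHom hLc
    have e1 : (⇑L.toAddMonoidHom ∘ fun k : ℕ => N ^ k)
        = fun k : ℕ => (lap w).toBlocks₂₁ * ((diagonal dg)⁻¹ * AF) ^ k *
            (diagonal dg)⁻¹ * (lap w).toBlocks₁₂ := by
      funext k
      simp only [Function.comp_apply, LinearMap.toAddMonoidHom_coe]
      exact (hterm k).symm
    have e2 : L.toAddMonoidHom ((1 - N)⁻¹)
        = (lap w).toBlocks₂₁ * ((lap w).toBlocks₁₁)⁻¹ * (lap w).toBlocks₁₂ := by
      simp only [LinearMap.toAddMonoidHom_coe]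
      exact hval.symm
    rw [e1, e2] at key
    exact key
  refine ⟨hmain, ?_⟩
  -- part 2: entrywise walk sums
  intro s t hst
  have hentry : HasSum (fun k : ℕ => ((lap w).toBlocks₂₁ * ((diagonal dg)⁻¹ * AF) ^ k *
        (diagonal dg)⁻¹ * (lap w).toBlocks₁₂) s t)
      (((lap w).toBlocks₂₁ * ((lap w).toBlocks₁₁)⁻¹ * (lap w).toBlocks₁₂) s t) :=
    Pi.hasSum.mp (Pi.hasSum.mp hmain s) t
  -- compute the entries as walk sums
  have pow_entry : ∀ (k : ℕ) (a : Fv),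
      (((diagonal dg)⁻¹ * AF) ^ k * ((diagonal dg)⁻¹ * (lap w).toBlocks₁₂)) a t
        = -((dg a)⁻¹ * gsum w t k (Sum.inl a)) := by
    intro k
    induction k with
    | zero =>
      intro a
      rw [pow_zero, Matrix.one_mul, hDinv, Matrix.mul_apply]
      rw [Finset.sum_eq_single a]
      · rw [diagonal_apply_eq, hL12]
        show (dg a)⁻¹ * -w (Sum.inl a) (Sum.inr t) = _
        rw [gsum]
        ring
      · intro b _ hb
        rw [diagonal_apply_ne _ (Ne.symm hb), zero_mul]
      · intro h
        exact absurd (Finset.mem_univ a) h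
    | succ k ih =>
      intro a
      rw [pow_succ', Matrix.mul_assoc, Matrix.mul_apply]
      have : ∀ b : Fv, ((diagonal dg)⁻¹ * AF) a b
          * ((((diagonal dg)⁻¹ * AF) ^ k * ((diagonal dg)⁻¹ * (lap w).toBlocks₁₂)) b t)
          = -((dg a)⁻¹ * (w (Sum.inl a) (Sum.inl b) * (dg b)⁻¹ * gsum w t k (Sum.inl b))) := by
        intro b
        rw [ih b, hDinv, Matrix.diagonal_mul]
        show (dg a)⁻¹ * w (Sum.inl a) (Sum.inl b) * -((dg b)⁻¹ * gsum w t k (Sum.inl b)) = _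
        ring
      rw [Finset.sum_congr rfl fun b _ => this b, gsum_succ, Finset.mul_sum,
        ← Finset.sum_neg_distrib]
  have entry_eq : ∀ k : ℕ,
      ((lap w).toBlocks₂₁ * ((diagonal dg)⁻¹ * AF) ^ k *
        (diagonal dg)⁻¹ * (lap w).toBlocks₁₂) s t = walkSum w s t (k + 1) := by
    intro k
    rw [walkSum_eq_gsum, gsum_succ]
    have hassoc : (lap w).toBlocks₂₁ * ((diagonal dg)⁻¹ * AF) ^ k *
        (diagonal dg)⁻¹ * (lap w).toBlocks₁₂
        = (lap w).toBlocks₂₁ * (((diagonal dg)⁻¹ * AF) ^ k *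
            ((diagonal dg)⁻¹ * (lap w).toBlocks₁₂)) := by
      simp only [Matrix.mul_assoc]
    rw [hassoc, Matrix.mul_apply]
    refine Finset.sum_congr rfl fun b _ => ?_
    rw [pow_entry k b, hL21]
    show -w (Sum.inr s) (Sum.inl b) * -((dg b)⁻¹ * gsum w t k (Sum.inl b)) = _
    ring
  have hS : HasSum (fun k : ℕ => walkSum w s t (k + 1))
      (((lap w).toBlocks₂₁ * ((lap w).toBlocks₁₁)⁻¹ * (lap w).toBlocks₁₂) s t) := by
    have : (fun k : ℕ => ((lap w).toBlocks₂₁ * ((diagonal dg)⁻¹ * AF) ^ k *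
        (diagonal dg)⁻¹ * (lap w).toBlocks₁₂) s t) = fun k => walkSum w s t (k + 1) :=
      funext entry_eq
    rw [this] at hentry
    exact hentry
  have hS2 : HasSum (walkSum w s t)
      ((((lap w).toBlocks₂₁ * ((lap w).toBlocks₁₁)⁻¹ * (lap w).toBlocks₁₂) s t)
        + walkSum w s t 0) := by
    have := (hasSum_nat_add_iff (f := walkSum w s t) 1).mp hS
    rw [Finset.sum_range_one] at this
    exact this
  rw [hS2.tsum_eq]
  have hL22 : (lap w).toBlocks₂₂ s t = -w (Sum.inr s) (Sum.inr t) := by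
    have : (Sum.inr s : Fv ⊕ Cv) ≠ Sum.inr t := by simp [hst]
    simp [Matrix.toBlocks₂₂, lap, this]
    exact fun h' => absurd h' hst
  rw [Matrix.sub_apply, hL22]
  rw [show walkSum w s t 0 = w (Sum.inr s) (Sum.inr t) from rfl]
  ring
end
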